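/- arXiv:1504.03180 — 4 statements merged into one kernel-verified Lean document; each statement's English description precedes it below -/
import Mathlib

section
/- Let 𝕋 be an almost periodic time scale (Π ≠ {0}) and let f : 𝕋 → ℝ be continuous. Then for all a, b ∈ 𝕋 with a ≤ b and all τ ∈ Π, ∫_{[a,b)∩𝕋} f(t + τ) dμ_Δ(t) = ∫_{[a+τ, b+τ)∩𝕋} f(t) dμ_Δ(t). -/
open MeasureTheory Filter Set

noncomputable section

/-- Forward jump operator of a time scale `T`. -/
def tsSigma (T : Set ℝ) (t : ℝ) : ℝ := sInf {s | s ∈ T ∧ t < s}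

/-- Graininess of a time scale. -/
def tsGrain (T : Set ℝ) (t : ℝ) : ℝ := tsSigma T t - t

/-- The set `Π` of translation numbers of a time scale. -/
def tsPi (T : Set ℝ) : Set ℝ := {τ : ℝ | ∀ t ∈ T, t + τ ∈ T ∧ t - τ ∈ T}

/-- An almost periodic time scale: a nonempty closed subset of `ℝ` with `Π ≠ {0}`. -/
def APTimeScale (T : Set ℝ) : Prop :=
  T.Nonempty ∧ IsClosed T ∧ ∃ τ ∈ tsPi T, τ ≠ 0

/-- The Δ-measure of the time scale `T`:
Lebesgue measure restricted to `T` plus point masses `μ(t)·δ_t` at right-scattered points. -/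
def deltaMeasure (T : Set ℝ) : Measure ℝ :=
  volume.restrict T +
    Measure.sum (fun p : {t : ℝ // t ∈ T ∧ t < tsSigma T t} =>
      (ENNReal.ofReal (tsGrain T p.1)) • Measure.dirac (p.1 : ℝ))

/-- The integrand `g_a` appearing in the generalized exponential function. -/
def gExp (T : Set ℝ) (a : ℝ) (τ : ℝ) : ℝ :=
  if 0 < tsGrain T τ then Real.log (1 + tsGrain T τ * a) / tsGrain T τ else a

/-- The generalized exponential function `e_{⊖a}(t, s)` (intended for `s ≤ t`). -/
def eOminus (T : Set ℝ) (a t s : ℝ) : ℝ :=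
  Real.exp (-∫ τ in Ico s t ∩ T, gExp T a τ ∂(deltaMeasure T))

/-- `t̄ = min([0,∞) ∩ T)`. -/
def tsT0 (T : Set ℝ) : ℝ := sInf {t : ℝ | t ∈ T ∧ 0 ≤ t}

/-- `Q_r = [t̄ - r, t̄ + r] ∩ T`. -/
def Qr (T : Set ℝ) (r : ℝ) : Set ℝ := Icc (tsT0 T - r) (tsT0 T + r) ∩ T

/-- `u(Q_r) = ∫_{Q_r} u dμ_Δ`. -/
def uQ (T : Set ℝ) (u : ℝ → ℝ) (r : ℝ) : ℝ := ∫ t in Qr T r, u t ∂(deltaMeasure T)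

/-- The filter `r → ∞` along `Π`. -/
def alongPi (T : Set ℝ) : Filter ℝ := atTop ⊓ 𝓟 (tsPi T)

/-- The filter `|t| → ∞`, `t ∈ T`. -/
def absAtTopIn (T : Set ℝ) : Filter ℝ := (atTop ⊔ atBot) ⊓ 𝓟 T

/-- The class `U_∞` of admissible weights on the time scale `T`. -/
def UInfty (T : Set ℝ) (u : ℝ → ℝ) : Prop :=
  Measurable u ∧ (∀ t ∈ T, 0 < u t) ∧
  (∀ s : Set ℝ, Bornology.IsBounded s → IntegrableOn u (s ∩ T) (deltaMeasure T)) ∧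
  (∃ c > 0, ∀ t ∈ T, c ≤ u t) ∧
  Tendsto (uQ T u) (alongPi T) atTop

/-- The class `U_∞^Inv` of weights:
`limsup_{|t|→∞, t∈T} u(t+s)/u(t) < ∞` for every `s ∈ Π`. -/
def UInftyInv (T : Set ℝ) (u : ℝ → ℝ) : Prop :=
  UInfty T u ∧ ∀ s ∈ tsPi T, ∃ C : ℝ, ∀ᶠ t in absAtTopIn T, u (t + s) / u t ≤ C

variable {E : Type*} [NormedAddCommGroup E]

/-- Almost periodic functions on a time scale (Bohr-type definition via `Π`). -/
def APfun (T : Set ℝ) (f : ℝ → E) : Prop :=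
  ContinuousOn f T ∧
  ∀ ε > 0, ∃ l > 0, ∀ x : ℝ, ∃ τ ∈ tsPi T, τ ∈ Icc x (x + l) ∧
    ∀ t ∈ T, ‖f (t + τ) - f t‖ < ε

/-- Bounded continuous functions on the time scale `T`. -/
def BCfun (T : Set ℝ) (f : ℝ → E) : Prop :=
  ContinuousOn f T ∧ ∃ C : ℝ, ∀ t ∈ T, ‖f t‖ ≤ C

/-- The weighted ergodic space `PAP₀(T, E, u)`. -/
def PAP0fun (T : Set ℝ) (u : ℝ → ℝ) (f : ℝ → E) : Prop :=
  BCfun T f ∧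
  Tendsto (fun r => (uQ T u r)⁻¹ * ∫ t in Qr T r, ‖f t‖ * u t ∂(deltaMeasure T))
    (alongPi T) (nhds 0)

/-- Weighted pseudo-almost periodic functions on the time scale `T`. -/
def PAPfun (T : Set ℝ) (u : ℝ → ℝ) (f : ℝ → E) : Prop :=
  ∃ g h : ℝ → E, APfun T g ∧ PAP0fun T u h ∧ ∀ t ∈ T, f t = g t + h t

/-- `d` is the Δ-derivative of `f` at `t ∈ T`. -/
def deltaDeriv [NormedSpace ℝ E] (T : Set ℝ) (f : ℝ → E) (t : ℝ) (d : E) : Prop :=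
  ∀ ε > 0, ∃ δ > 0, ∀ s ∈ T, |s - t| < δ →
    ‖f (tsSigma T t) - f s - (tsSigma T t - s) • d‖ ≤ ε * |tsSigma T t - s|

/-- A fixed matrix norm (the ℓ¹ norm of the entries). -/
def matNorm {n : ℕ} (M : Matrix (Fin n) (Fin n) ℝ) : ℝ := ∑ i, ∑ j, |M i j|

/-- The linear system `x^Δ = A(t) x` admits an exponential dichotomy on `T`. -/
def ExpDichotomy {n : ℕ} (T : Set ℝ) (A : ℝ → Matrix (Fin n) (Fin n) ℝ) : Prop :=
  ∃ K > (0 : ℝ), ∃ α > (0 : ℝ), ∃ P : Matrix (Fin n) (Fin n) ℝ, P * P = P ∧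
    ∃ X : ℝ → Matrix (Fin n) (Fin n) ℝ,
      (∀ t ∈ T, IsUnit (X t)) ∧
      (∀ t ∈ T, ∀ i j, deltaDeriv T (fun s => X s i j) t ((A t * X t) i j)) ∧
      (∀ s ∈ T, ∀ t ∈ T, tsSigma T s ≤ t →
        matNorm (X t * P * (X (tsSigma T s))⁻¹) ≤ K * eOminus T α t (tsSigma T s)) ∧
      (∀ s ∈ T, ∀ t ∈ T, t ≤ tsSigma T s →
        matNorm (X t * (1 - P) * (X (tsSigma T s))⁻¹) ≤ K * eOminus T α (tsSigma T s) t)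

/-- `x` is a bounded continuous solution on `T` of `x^Δ(t) = A(t) x(t) + F(t)`. -/
def IsLinBddSol {n : ℕ} (T : Set ℝ) (A : ℝ → Matrix (Fin n) (Fin n) ℝ)
    (F x : ℝ → Fin n → ℝ) : Prop :=
  BCfun T x ∧ ∀ t ∈ T, deltaDeriv T x t ((A t).mulVec (x t) + F t)

/-- `x` is a (continuous, Δ-differentiable) solution of the delayed cellular neural network
on the set `S ⊆ T`. -/
def IsCNNSol {n : ℕ} (T S : Set ℝ) (c : Fin n → ℝ → ℝ) (a b : Fin n → Fin n → ℝ → ℝ)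
    (f : Fin n → ℝ → ℝ) (γ : Fin n → Fin n → ℝ) (I : Fin n → ℝ → ℝ)
    (x : ℝ → Fin n → ℝ) : Prop :=
  ContinuousOn x T ∧
  ∀ t ∈ S, ∀ i, deltaDeriv T (fun s => x s i) t
    (-(c i t) * x t i + (∑ j, a i j t * f j (x t j)) +
      (∑ j, b i j t * f j (x (t - γ i j) j)) + I i t)

end

section Aux

variable {T : Set ℝ}

lemma tsPi_preimage {τ : ℝ} (hτ : τ ∈ tsPi T) : (fun t => t + τ) ⁻¹' T = T := by
  ext t
  constructor
  · intro h
    have h2 := (hτ _ h).2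
    simpa using h2
  · intro h
    exact (hτ t h).1

lemma ts_exists_gt (hT : APTimeScale T) {t : ℝ} (ht : t ∈ T) : ∃ s ∈ T, t < s := by
  obtain ⟨-, -, τ₀, hτ₀, hne⟩ := hT
  rcases lt_or_gt_of_ne hne with h | h
  · exact ⟨t - τ₀, (hτ₀ t ht).2, by linarith⟩
  · exact ⟨t + τ₀, (hτ₀ t ht).1, by linarith⟩

lemma tsSigma_shift (hT : APTimeScale T) {τ t : ℝ} (hτ : τ ∈ tsPi T) (ht : t ∈ T) :
    tsSigma T (t + τ) = tsSigma T t + τ := by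
  have himg : {s | s ∈ T ∧ t + τ < s} = (fun s => s + τ) '' {s | s ∈ T ∧ t < s} := by
    ext s
    constructor
    · rintro ⟨hs, hlt⟩
      exact ⟨s - τ, ⟨(hτ s hs).2, by linarith⟩, by ring⟩
    · rintro ⟨u, ⟨hu, hlt⟩, rfl⟩
      exact ⟨(hτ u hu).1, show t + τ < u + τ by linarith⟩
  obtain ⟨s, hs, hts⟩ := ts_exists_gt hT ht
  have hne : {s | s ∈ T ∧ t < s}.Nonempty := ⟨s, hs, hts⟩
  have hbdd : BddBelow {s | s ∈ T ∧ t < s} := ⟨t, fun x hx => hx.2.le⟩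
  have hmap := (OrderIso.addRight τ).map_csInf' hne hbdd
  simp only [OrderIso.addRight_apply] at hmap
  unfold tsSigma
  rw [himg, ← hmap]

lemma tsGrain_shift (hT : APTimeScale T) {τ t : ℝ} (hτ : τ ∈ tsPi T) (ht : t ∈ T) :
    tsGrain T (t + τ) = tsGrain T t := by
  unfold tsGrain
  rw [tsSigma_shift hT hτ ht]
  ring

lemma map_deltaMeasure (hT : APTimeScale T) {τ : ℝ} (hτ : τ ∈ tsPi T) :
    (deltaMeasure T).map (fun t => t + τ) = deltaMeasure T := by
  have hm : Measurable (fun t : ℝ => t + τ) := measurable_add_const τ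
  unfold deltaMeasure
  rw [Measure.map_add _ _ hm]
  congr 1
  · have h1 : ((volume : Measure ℝ).map (fun t : ℝ => t + τ)).restrict T
        = ((volume : Measure ℝ).restrict ((fun t : ℝ => t + τ) ⁻¹' T)).map (fun t => t + τ) :=
      Measure.restrict_map hm hT.2.1.measurableSet
    rw [tsPi_preimage hτ] at h1
    rw [← h1]
    congr 1
    exact map_add_right_eq_self volume τ
  · have hmap_sum : ∀ (ν : {t : ℝ // t ∈ T ∧ t < tsSigma T t} → Measure ℝ),
        (Measure.sum ν).map (fun t => t + τ)
          = Measure.sum (fun p => (ν p).map (fun t => t + τ)) := by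
      intro ν
      ext s hs
      rw [Measure.map_apply hm hs, Measure.sum_apply _ (hm hs), Measure.sum_apply _ hs]
      congr 1
      ext p
      rw [Measure.map_apply hm hs]
    rw [hmap_sum]
    have heach : (fun p : {t : ℝ // t ∈ T ∧ t < tsSigma T t} =>
          ((ENNReal.ofReal (tsGrain T p.1)) • Measure.dirac (p.1 : ℝ)).map (fun t => t + τ))
        = fun p => (ENNReal.ofReal (tsGrain T p.1)) • Measure.dirac (p.1 + τ) := by
      funext p
      rw [Measure.map_smul, Measure.map_dirac' hm]
    rw [heach]
    set e : {t : ℝ // t ∈ T ∧ t < tsSigma T t} ≃ {t : ℝ // t ∈ T ∧ t < tsSigma T t} :=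
      { toFun := fun p => ⟨p.1 + τ, (hτ _ p.2.1).1, by
          rw [tsSigma_shift hT hτ p.2.1]; linarith [p.2.2]⟩
        invFun := fun p => ⟨p.1 - τ, (hτ _ p.2.1).2, by
          have hq : p.1 - τ ∈ T := (hτ _ p.2.1).2
          have h := tsSigma_shift hT hτ hq
          rw [sub_add_cancel] at h
          linarith [p.2.2]⟩
        left_inv := fun p => by ext; simp
        right_inv := fun p => by ext; simp } with he
    have : (fun p : {t : ℝ // t ∈ T ∧ t < tsSigma T t} =>
          (ENNReal.ofReal (tsGrain T p.1)) • Measure.dirac ((p.1 : ℝ) + τ))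
        = (fun p : {t : ℝ // t ∈ T ∧ t < tsSigma T t} =>
          (ENNReal.ofReal (tsGrain T p.1)) • Measure.dirac (p.1 : ℝ)) ∘ e := by
      funext p
      simp only [Function.comp_apply, he, Equiv.coe_fn_mk]
      rw [tsGrain_shift hT hτ p.2.1]
    rw [this, Measure.sum_comp_equiv]

end Aux

/-- Translation invariance of the Δ-integral on an almost periodic time scale:
for a continuous `f : T → ℝ`, all `a, b ∈ T` with `a ≤ b`, and all `τ ∈ Π`,
`∫_{[a,b)∩T} f(t+τ) dμ_Δ(t) = ∫_{[a+τ,b+τ)∩T} f(t) dμ_Δ(t)`. -/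
theorem deltaIntegral_translate (T : Set ℝ) (hT : APTimeScale T)
    (f : ℝ → ℝ) (hf : ContinuousOn f T) :
    ∀ a ∈ T, ∀ b ∈ T, a ≤ b → ∀ τ ∈ tsPi T,
      ∫ t in Ico a b ∩ T, f (t + τ) ∂(deltaMeasure T)
        = ∫ t in Ico (a + τ) (b + τ) ∩ T, f t ∂(deltaMeasure T) := by
  intro a ha b hb hab τ hτ
  have hm : Measurable (fun t : ℝ => t + τ) := measurable_add_const τ
  have hTmeas : MeasurableSet T := hT.2.1.measurableSet
  have hB : MeasurableSet (Ico (a + τ) (b + τ) ∩ T) := measurableSet_Ico.inter hTmeas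
  have hpre : (fun t : ℝ => t + τ) ⁻¹' (Ico (a + τ) (b + τ) ∩ T) = Ico a b ∩ T := by
    rw [preimage_inter, tsPi_preimage hτ]
    congr 1
    ext t
    simp only [mem_preimage, mem_Ico]
    constructor <;> (rintro ⟨h1, h2⟩; constructor <;> linarith)
  have key : (deltaMeasure T).restrict (Ico (a + τ) (b + τ) ∩ T)
      = ((deltaMeasure T).restrict (Ico a b ∩ T)).map (fun t => t + τ) := by
    conv_lhs => rw [← map_deltaMeasure hT hτ]
    rw [Measure.restrict_map hm hB, hpre]
  have hfT : AEStronglyMeasurable f ((deltaMeasure T).restrict T) :=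
    hf.aestronglyMeasurable hTmeas
  have hle : (deltaMeasure T).restrict (Ico (a + τ) (b + τ) ∩ T)
      ≤ (deltaMeasure T).restrict T :=
    Measure.restrict_mono inter_subset_right le_rfl
  have hfm : AEStronglyMeasurable f
      (((deltaMeasure T).restrict (Ico a b ∩ T)).map (fun t => t + τ)) := by
    rw [← key]
    exact hfT.mono_measure hle
  rw [key, integral_map hm.aemeasurable hfm]
end

section
/- Let 𝕋 be an almost periodic time scale (Π ≠ {0}) with bounded graininess μ̄ := sup_{t∈𝕋} μ(t) < ∞, and let a > 0. Then for all s, t ∈ 𝕋 with s ≤ t, e_{⊖a}(t, s) ≤ exp(−a(t − s)/(1 + μ̄·a)). -/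
open MeasureTheory Filter Set

/-!
On `[s, t) ∩ T` the integrand satisfies `g_a ≥ a / (1 + μ̄ a)`, because
`log (1 + x) ≥ x / (1 + x)`. The Δ-measure of `[s, t) ∩ T` is exactly `t - s`: the set
`[s, t) \ T` is the disjoint union of the gaps `(p, σ p)` over the right-scattered points
`p ∈ [s, t) ∩ T`, and the gap after `p` has Lebesgue measure `μ(p)`, the mass the Δ-measure puts
at `p`. Translating by a positive period shows that `T` is unbounded above, so `σ` maps into `T`.
-/

section JumpOperator

variable {T : Set ℝ}

theorem neg_mem_tsPi {τ : ℝ} (hτ : τ ∈ tsPi T) : -τ ∈ tsPi T := fun t ht => by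
  simpa [sub_eq_add_neg, and_comm] using hτ t ht

theorem add_nsmul_mem_of_mem_tsPi {τ t : ℝ} (hτ : τ ∈ tsPi T) (ht : t ∈ T) (n : ℕ) :
    t + n • τ ∈ T := by
  induction n with
  | zero => simpa using ht
  | succ n ih => rw [succ_nsmul, ← add_assoc]; exact (hτ _ ih).1

theorem APTimeScale.not_bddAbove (hT : APTimeScale T) : ¬BddAbove T := by
  obtain ⟨⟨t₀, ht₀⟩, -, τ, hτ, hτ0⟩ := hT
  obtain ⟨τ, hτ, hτpos⟩ : ∃ τ ∈ tsPi T, 0 < τ := by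
    rcases hτ0.lt_or_gt with h | h
    · exact ⟨-τ, neg_mem_tsPi hτ, neg_pos.2 h⟩
    · exact ⟨τ, hτ, h⟩
  rintro ⟨b, hb⟩
  obtain ⟨n, hn⟩ := Archimedean.arch (b - t₀ + 1) hτpos
  have := hb (add_nsmul_mem_of_mem_tsPi hτ ht₀ n)
  linarith

theorem tsSigma_le {t u : ℝ} (hu : u ∈ T) (htu : t < u) : tsSigma T t ≤ u :=
  csInf_le ⟨t, fun _ hx => hx.2.le⟩ ⟨hu, htu⟩

theorem notMem_of_mem_Ioo_tsSigma {t x : ℝ} (hx : x ∈ Ioo t (tsSigma T t)) : x ∉ T :=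
  fun hxT => (tsSigma_le hxT hx.1).not_gt hx.2

theorem pairwiseDisjoint_Ioo_tsSigma : T.PairwiseDisjoint fun t => Ioo t (tsSigma T t) := by
  have key : ∀ p ∈ T, ∀ q ∈ T, p < q →
      Disjoint (Ioo p (tsSigma T p)) (Ioo q (tsSigma T q)) := fun p _ q hq hpq =>
    Set.disjoint_left.2 fun x hxp hxq => (hxp.2.trans_le (tsSigma_le hq hpq)).not_gt hxq.1
  intro p hp q hq hne
  rcases hne.lt_or_gt with h | h
  · exact key p hp q hq h
  · exact (key q hq p hp h).symm

theorem countable_setOf_lt_tsSigma : {t | t ∈ T ∧ t < tsSigma T t}.Countable :=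
  (pairwiseDisjoint_Ioo_tsSigma.subset fun _ ht => ht.1).countable_of_Ioo fun _ ht => ht.2

theorem le_tsSigma (hT : ¬BddAbove T) (t : ℝ) : t ≤ tsSigma T t := by
  obtain ⟨u, hu, htu⟩ := not_bddAbove_iff.1 hT t
  exact le_csInf ⟨u, hu, htu⟩ fun _ hx => hx.2.le

theorem tsGrain_nonneg (hT : ¬BddAbove T) (t : ℝ) : 0 ≤ tsGrain T t :=
  sub_nonneg.2 (le_tsSigma hT t)

theorem tsSigma_mem (hc : IsClosed T) (hT : ¬BddAbove T) (t : ℝ) : tsSigma T t ∈ T := by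
  obtain ⟨u, hu, htu⟩ := not_bddAbove_iff.1 hT t
  have hne : {s | s ∈ T ∧ t < s}.Nonempty := ⟨u, hu, htu⟩
  exact hc.closure_subset_iff.2 (fun _ hx => hx.1)
    ((isGLB_csInf hne ⟨t, fun _ hx => hx.2.le⟩).mem_closure hne)

theorem monotone_tsSigma (hT : ¬BddAbove T) : Monotone (tsSigma T) := fun t t' h => by
  obtain ⟨u, hu, htu⟩ := not_bddAbove_iff.1 hT t'
  exact csInf_le_csInf ⟨t, fun _ hx => hx.2.le⟩ ⟨u, hu, htu⟩
    fun x hx => ⟨hx.1, h.trans_lt hx.2⟩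

theorem measurable_gExp (hT : ¬BddAbove T) (a : ℝ) : Measurable (gExp T a) := by
  have hμ : Measurable (tsGrain T) := (monotone_tsSigma hT).measurable.sub measurable_id
  exact Measurable.ite (measurableSet_lt measurable_const hμ)
    ((Real.measurable_log.comp (measurable_const.add (hμ.mul_const a))).div hμ) measurable_const

theorem exists_mem_Ioo_tsSigma_of_notMem (hc : IsClosed T) (hT : ¬BddAbove T) {s x : ℝ}
    (hs : s ∈ T) (hsx : s ≤ x) (hx : x ∉ T) : ∃ p ∈ T, s ≤ p ∧ x ∈ Ioo p (tsSigma T p) := by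
  have hne : (T ∩ Iic x).Nonempty := ⟨s, hs, hsx⟩
  have hbdd : BddAbove (T ∩ Iic x) := ⟨x, fun _ hy => hy.2⟩
  set p := sSup (T ∩ Iic x)
  obtain ⟨hpT, hpx_le⟩ : p ∈ T ∩ Iic x := (hc.inter isClosed_Iic).csSup_mem hne hbdd
  have hpx : p < x := hpx_le.lt_of_ne fun h => hx (h ▸ hpT)
  have hxσ : x ≤ tsSigma T p := by
    obtain ⟨u, hu, hpu⟩ := not_bddAbove_iff.1 hT p
    refine le_csInf ⟨u, hu, hpu⟩ fun u hu => le_of_not_gt fun hux => ?_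
    exact hu.2.not_ge (le_csSup hbdd ⟨hu.1, hux.le⟩)
  refine ⟨p, hpT, le_csSup hbdd ⟨hs, hsx⟩, hpx, hxσ.lt_of_ne ?_⟩
  intro h
  exact hx (h ▸ tsSigma_mem hc hT p)

end JumpOperator

section DeltaMeasure

variable {T : Set ℝ}

theorem deltaMeasure_apply_of_subset {A : Set ℝ} [DecidablePred (· ∈ A)]
    (hA : MeasurableSet A) (hAT : A ⊆ T) :
    deltaMeasure T A = volume A + ∑' p : {t // t ∈ T ∧ t < tsSigma T t},
      volume (if (p : ℝ) ∈ A then Ioo (p : ℝ) (tsSigma T p) else ∅) := by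
  rw [deltaMeasure, Measure.add_apply, Measure.sum_apply _ hA, Measure.restrict_apply hA,
    inter_eq_left.2 hAT]
  congr 1
  refine tsum_congr fun p => ?_
  rw [Measure.smul_apply, Measure.dirac_apply' _ hA]
  split_ifs with hp
  · simp [hp, tsGrain]
  · simp [hp]

open scoped Classical in
theorem deltaMeasure_Ico_inter (hc : IsClosed T) (hT : ¬BddAbove T) {s t : ℝ} (hs : s ∈ T)
    (ht : t ∈ T) : deltaMeasure T (Ico s t ∩ T) = ENNReal.ofReal (t - s) := by
  set A := Ico s t ∩ T
  have hA : MeasurableSet A := measurableSet_Ico.inter hc.measurableSet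
  set B := fun p : {t // t ∈ T ∧ t < tsSigma T t} =>
    if (p : ℝ) ∈ A then Ioo (p : ℝ) (tsSigma T p) else ∅
  have hB : ⋃ p, B p = Ico s t \ T := by
    ext x
    simp only [mem_iUnion, B]
    constructor
    · rintro ⟨p, hx⟩
      split_ifs at hx with hp
      · exact ⟨⟨hp.1.1.trans hx.1.le, hx.2.trans_le (tsSigma_le ht hp.1.2)⟩,
          notMem_of_mem_Ioo_tsSigma hx⟩
      · exact absurd hx (notMem_empty x)
    · rintro ⟨hx, hxT⟩
      obtain ⟨p, hpT, hsp, hpx⟩ := exists_mem_Ioo_tsSigma_of_notMem hc hT hs hx.1 hxT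
      refine ⟨⟨p, hpT, hpx.1.trans hpx.2⟩, ?_⟩
      rw [if_pos ⟨⟨hsp, hpx.1.trans hx.2⟩, hpT⟩]
      exact hpx
  have hBdisj : Pairwise (Function.onFun Disjoint B) := by
    intro p q hpq
    have := pairwiseDisjoint_Ioo_tsSigma p.2.1 q.2.1 (Subtype.coe_injective.ne hpq)
    simp only [Function.onFun, B]
    split_ifs <;> simp_all
  have hBmeas : ∀ p, MeasurableSet (B p) := fun p => by
    dsimp only [B]
    split_ifs
    exacts [measurableSet_Ioo, .empty]
  have : Countable {t // t ∈ T ∧ t < tsSigma T t} := countable_setOf_lt_tsSigma.to_subtype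
  rw [deltaMeasure_apply_of_subset hA inter_subset_right, ← measure_iUnion hBdisj hBmeas, hB,
    ← Real.volume_Ico]
  exact measure_inter_add_sdiff _ hc.measurableSet

end DeltaMeasure

section Exponential

variable {T : Set ℝ} {a : ℝ}

theorem gExp_nonneg (ha : 0 ≤ a) (τ : ℝ) : 0 ≤ gExp T a τ := by
  unfold gExp
  split_ifs with h
  · exact div_nonneg (Real.log_nonneg (by nlinarith)) h.le
  · exact ha

theorem gExp_le (ha : 0 ≤ a) (τ : ℝ) : gExp T a τ ≤ a := by
  unfold gExp
  split_ifs with h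
  · have hpos : 0 < 1 + tsGrain T τ * a := by nlinarith
    rw [div_le_iff₀ h]
    linarith [Real.log_le_sub_one_of_pos hpos]
  · exact le_rfl

theorem div_one_add_mul_le_gExp (ha : 0 ≤ a) {M τ : ℝ} (hM : 0 ≤ M) (hτ : tsGrain T τ ≤ M) :
    a / (1 + M * a) ≤ gExp T a τ := by
  unfold gExp
  split_ifs with h
  · set m := tsGrain T τ
    have hm : 0 < 1 + m * a := by nlinarith
    calc a / (1 + M * a) ≤ a / (1 + m * a) := by gcongr
      _ = (1 - (1 + m * a)⁻¹) / m := by field_simp; ring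
      _ ≤ Real.log (1 + m * a) / m := by gcongr; exact Real.one_sub_inv_le_log_of_pos hm
  · exact div_le_self ha (by nlinarith)

theorem mul_sub_le_setIntegral_gExp (hc : IsClosed T) (hT : ¬BddAbove T) (ha : 0 ≤ a)
    {M s t : ℝ} (hM : ∀ τ ∈ T, tsGrain T τ ≤ M) (hs : s ∈ T) (ht : t ∈ T) (hst : s ≤ t) :
    a / (1 + M * a) * (t - s) ≤ ∫ τ in Ico s t ∩ T, gExp T a τ ∂(deltaMeasure T) := by
  have hμ := deltaMeasure_Ico_inter hc hT hs ht
  have hint : IntegrableOn (gExp T a) (Ico s t ∩ T) (deltaMeasure T) :=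
    .of_bound (by simp [hμ]) (measurable_gExp hT a).aestronglyMeasurable a <|
      .of_forall fun τ => by rw [Real.norm_of_nonneg (gExp_nonneg ha τ)]; exact gExp_le ha τ
  have hM0 : 0 ≤ M := (tsGrain_nonneg hT s).trans (hM s hs)
  have := setIntegral_ge_of_const_le_real (measurableSet_Ico.inter hc.measurableSet)
    (by simp [hμ]) (fun τ hτ => div_one_add_mul_le_gExp ha hM0 (hM τ hτ.2)) hint
  rwa [measureReal_def, hμ, ENNReal.toReal_ofReal (sub_nonneg.2 hst)] at this

end Exponential

/-- Bound on the generalized exponential: if `T` is an almost periodic time scale with bounded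
graininess `μ̄ := sup_{t ∈ T} μ(t) < ∞` and `a > 0`, then for all `s, t ∈ T` with `s ≤ t`,
`e_{⊖a}(t, s) ≤ exp(−a(t − s)/(1 + μ̄·a))`. -/
theorem eOminus_le_exp (T : Set ℝ) (hT : APTimeScale T)
    (hbdd : BddAbove (Set.range fun t : T => tsGrain T t))
    (a : ℝ) (ha : 0 < a) :
    ∀ s ∈ T, ∀ t ∈ T, s ≤ t →
      eOminus T a t s ≤ Real.exp (-(a * (t - s)) / (1 + (⨆ p : T, tsGrain T (p : ℝ)) * a)) := by
  intro s hs t ht hst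
  have key := mul_sub_le_setIntegral_gExp hT.2.1 hT.not_bddAbove ha.le
    (fun τ hτ => le_ciSup hbdd ⟨τ, hτ⟩) hs ht hst
  rw [eOminus, Real.exp_le_exp, neg_div, neg_le_neg_iff, ← div_mul_eq_mul_div]
  exact key
end

section
/- Let 𝕋 be an almost periodic time scale (Π ≠ {0}) and suppose u ∈ U_∞ satisfies: for every τ ∈ Π, limsup_{|t|→∞, t∈𝕋} u(t+τ)/u(t) < ∞. Then (i) for every τ ∈ Π with τ > 0, limsup_{r→∞, r∈Π} u(Q_{r+τ})/u(Q_r) < ∞; and (ii) PAP_0(𝕋,ℝⁿ,u) is translation invariant, i.e. for every φ ∈ PAP_0(𝕋,ℝⁿ,u) and every τ ∈ Π, the function t ↦ φ(t − τ) belongs to PAP_0(𝕋,ℝⁿ,u). -/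
open MeasureTheory Filter Set

namespace TSaux
open MeasureTheory Filter Set

variable {T : Set ℝ}

lemma pi_neg {τ : ℝ} (h : τ ∈ tsPi T) : -τ ∈ tsPi T := by
  intro t ht
  have := h t ht
  constructor
  · simpa [sub_eq_add_neg] using this.2
  · simpa [sub_eq_add_neg] using this.1

lemma pi_add {σ τ : ℝ} (hσ : σ ∈ tsPi T) (hτ : τ ∈ tsPi T) : σ + τ ∈ tsPi T := by
  intro t ht
  constructor
  · have h1 := (hσ t ht).1
    have h2 := (hτ _ h1).1
    simpa [add_assoc] using h2
  · have h1 := (hσ t ht).2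
    have h2 := (hτ _ h1).2
    have : t - σ - τ = t - (σ + τ) := by ring
    rwa [this] at h2

lemma mem_add_iff {τ : ℝ} (h : τ ∈ tsPi T) (t : ℝ) : t + τ ∈ T ↔ t ∈ T := by
  constructor
  · intro ht
    have := (h _ ht).2
    simpa using this
  · intro ht; exact (h t ht).1

lemma pi_abs {τ : ℝ} (h : τ ∈ tsPi T) : |τ| ∈ tsPi T := by
  rcases abs_choice τ with h'|h' <;> rw [h']
  exacts [h, pi_neg h]

lemma mem_add_nat {τ : ℝ} (h : τ ∈ tsPi T) {t : ℝ} (ht : t ∈ T) (n : ℕ) : t + n * τ ∈ T := by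
  induction n with
  | zero => simpa using ht
  | succ n ih =>
      have := (h _ ih).1
      have e : t + (n+1 : ℕ) * τ = t + n * τ + τ := by push_cast; ring
      rwa [e]

lemma exists_gt (hT : APTimeScale T) (x : ℝ) : ∃ t ∈ T, x < t := by
  obtain ⟨⟨t₀, ht₀⟩, -, τ₀, hτ₀, hτ₀ne⟩ := hT
  have hab : |τ₀| ∈ tsPi T := pi_abs hτ₀
  have hpos : 0 < |τ₀| := abs_pos.2 hτ₀ne
  obtain ⟨n, hn⟩ := exists_nat_gt ((x - t₀) / |τ₀|)
  refine ⟨t₀ + n * |τ₀|, mem_add_nat hab ht₀ n, ?_⟩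
  have := (div_lt_iff₀ hpos).1 hn
  linarith

lemma sigma_add (hT : APTimeScale T) {τ : ℝ} (hτ : τ ∈ tsPi T) (t : ℝ) :
    tsSigma T (t + τ) = tsSigma T t + τ := by
  have himg : {s | s ∈ T ∧ t + τ < s} = (fun x => x + τ) '' {s | s ∈ T ∧ t < s} := by
    ext s
    constructor
    · rintro ⟨hsT, hlt⟩
      refine ⟨s - τ, ⟨?_, by linarith⟩, by ring⟩
      have : s - τ + τ ∈ T := by simpa using hsT
      exact (mem_add_iff hτ (s - τ)).1 this
    · rintro ⟨s', ⟨hs'T, hlt⟩, rfl⟩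
      exact ⟨(hτ _ hs'T).1, by simp only []; linarith⟩
  have hne : {s | s ∈ T ∧ t < s}.Nonempty := by
    obtain ⟨s, hs, hlt⟩ := exists_gt hT t
    exact ⟨s, hs, hlt⟩
  have hbdd : BddBelow {s | s ∈ T ∧ t < s} := ⟨t, fun s hs => le_of_lt hs.2⟩
  have := (OrderIso.addRight τ).map_csInf' hne hbdd
  simp only [OrderIso.addRight_apply] at this
  rw [tsSigma, tsSigma, himg]
  rw [this.symm]

lemma grain_add (hT : APTimeScale T) {τ : ℝ} (hτ : τ ∈ tsPi T) (t : ℝ) :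
    tsGrain T (t + τ) = tsGrain T t := by
  simp only [tsGrain, sigma_add hT hτ]; ring

/-- The scattered-point equivalence induced by a translation number. -/
noncomputable def scatEquiv (hT : APTimeScale T) {τ : ℝ} (hτ : τ ∈ tsPi T) :
    {t : ℝ // t ∈ T ∧ t < tsSigma T t} ≃ {t : ℝ // t ∈ T ∧ t < tsSigma T t} where
  toFun p := ⟨p.1 + τ, (hτ _ p.2.1).1, by
    rw [sigma_add hT hτ]; have := p.2.2; linarith⟩
  invFun p := ⟨p.1 - τ, (hτ _ p.2.1).2, by
    have h : p.1 - τ + τ = p.1 := by ring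
    have := sigma_add hT hτ (p.1 - τ)
    rw [h] at this
    have h2 := p.2.2
    linarith⟩
  left_inv p := by ext; simp
  right_inv p := by ext; simp

lemma measurableSet_T (hT : APTimeScale T) : MeasurableSet T := hT.2.1.measurableSet

lemma deltaMeasure_map (hT : APTimeScale T) {τ : ℝ} (hτ : τ ∈ tsPi T) :
    Measure.map (· + τ) (deltaMeasure T) = deltaMeasure T := by
  have hmeas : Measurable (fun x : ℝ => x + τ) := measurable_add_const τ
  apply Measure.ext
  intro s hs
  have hpre : MeasurableSet ((fun x : ℝ => x + τ) ⁻¹' s) := hmeas hs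
  rw [Measure.map_apply hmeas hs]
  have hTpre : (fun x : ℝ => x + τ) ⁻¹' T = T := by
    ext x; exact mem_add_iff hτ x
  simp only [deltaMeasure, Measure.add_apply, Measure.sum_apply _ hs, Measure.sum_apply _ hpre,
    Measure.smul_apply, smul_eq_mul]
  congr 1
  · rw [Measure.restrict_apply hpre, Measure.restrict_apply hs]
    have : (fun x : ℝ => x + τ) ⁻¹' s ∩ T = (fun x : ℝ => x + τ) ⁻¹' (s ∩ T) := by
      rw [preimage_inter, hTpre]
    rw [this]
    exact measure_preimage_add_right volume τ (s ∩ T)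
  · rw [← Equiv.tsum_eq (scatEquiv hT hτ)
      (fun p => ENNReal.ofReal (tsGrain T p.1) * Measure.dirac (p.1 : ℝ) s)]
    apply tsum_congr
    intro p
    show ENNReal.ofReal (tsGrain T p.1) * Measure.dirac (p.1 : ℝ) ((fun x : ℝ => x + τ) ⁻¹' s) =
      ENNReal.ofReal (tsGrain T (((scatEquiv hT hτ) p).1 : ℝ)) *
        Measure.dirac ((((scatEquiv hT hτ) p).1 : ℝ)) s
    have he : (((scatEquiv hT hτ) p).1 : ℝ) = (p.1 : ℝ) + τ := rfl
    rw [he, grain_add hT hτ, Measure.dirac_apply' _ hpre, Measure.dirac_apply' _ hs]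
    rfl

lemma deltaMP (hT : APTimeScale T) {τ : ℝ} (hτ : τ ∈ tsPi T) :
    MeasurePreserving (fun x : ℝ => x + τ) (deltaMeasure T) (deltaMeasure T) :=
  ⟨measurable_add_const τ, deltaMeasure_map hT hτ⟩

lemma deltaMeasure_compl_T (hT : APTimeScale T) : deltaMeasure T Tᶜ = 0 := by
  have hs : MeasurableSet Tᶜ := (measurableSet_T hT).compl
  simp only [deltaMeasure, Measure.add_apply, Measure.sum_apply _ hs, Measure.smul_apply,
    smul_eq_mul]
  rw [Measure.restrict_apply hs]
  simp only [compl_inter_self, measure_empty]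
  rw [zero_add]
  have : ∀ p : {t : ℝ // t ∈ T ∧ t < tsSigma T t},
      ENNReal.ofReal (tsGrain T p.1) * Measure.dirac (p.1 : ℝ) Tᶜ = 0 := by
    intro p
    rw [Measure.dirac_apply' _ hs]
    simp [Set.indicator_apply, p.2.1]
  exact (tsum_congr this).trans tsum_zero

lemma restrict_inter_T (hT : APTimeScale T) (A : Set ℝ) :
    (deltaMeasure T).restrict A = (deltaMeasure T).restrict (A ∩ T) := by
  apply Measure.restrict_congr_set
  rw [MeasureTheory.ae_eq_set]
  constructor
  · exact measure_mono_null (fun x hx => hx.2 ∘ fun h => ⟨hx.1, h⟩) (deltaMeasure_compl_T hT)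
  · simp [Set.diff_eq_empty.2 inter_subset_left]

lemma addEmb (τ : ℝ) : MeasurableEmbedding (fun x : ℝ => x + τ) :=
  (Homeomorph.addRight τ).measurableEmbedding

lemma setIntegral_shift (hT : APTimeScale T) {τ : ℝ} (hτ : τ ∈ tsPi T) (f : ℝ → ℝ) (A : Set ℝ) :
    ∫ x in A, f x ∂(deltaMeasure T) =
      ∫ x in (fun x : ℝ => x + τ) ⁻¹' A, f (x + τ) ∂(deltaMeasure T) :=
  ((deltaMP hT hτ).setIntegral_preimage_emb (addEmb τ) f A).symm

lemma integrableOn_shift (hT : APTimeScale T) {τ : ℝ} (hτ : τ ∈ tsPi T) {f : ℝ → ℝ} {A : Set ℝ}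
    (hA : MeasurableSet A) :
    IntegrableOn (fun x => f (x + τ)) ((fun x : ℝ => x + τ) ⁻¹' A) (deltaMeasure T) ↔
      IntegrableOn f A (deltaMeasure T) := by
  exact ((deltaMP hT hτ).restrict_preimage hA).integrable_comp_emb (addEmb τ)

lemma u_ae_nonneg (hT : APTimeScale T) {u : ℝ → ℝ} (hu2 : ∀ t ∈ T, 0 < u t) :
    0 ≤ᵐ[deltaMeasure T] u := by
  have hsub : {x : ℝ | ¬ (0 : ℝ → ℝ) x ≤ u x} ⊆ Tᶜ :=
    fun x hx hxT => hx (le_of_lt (hu2 x hxT))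
  exact (ae_iff).2 (measure_mono_null hsub (deltaMeasure_compl_T hT))

lemma u_shift_ae_nonneg (hT : APTimeScale T) {u : ℝ → ℝ} (hu2 : ∀ t ∈ T, 0 < u t)
    {τ : ℝ} (hτ : τ ∈ tsPi T) :
    0 ≤ᵐ[deltaMeasure T] fun x => u (x + τ) := by
  have hsub : {x : ℝ | ¬ (0 : ℝ → ℝ) x ≤ u (x + τ)} ⊆ Tᶜ :=
    fun x hx hxT => hx (le_of_lt (hu2 _ ((hτ x hxT).1)))
  exact (ae_iff).2 (measure_mono_null hsub (deltaMeasure_compl_T hT))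

lemma shift_bound {u : ℝ → ℝ} (hu2 : ∀ t ∈ T, 0 < u t) {τ C : ℝ}
    (h : ∀ᶠ t in absAtTopIn T, u (t + τ) / u t ≤ C) :
    ∃ M : ℝ, ∀ t ∈ T, (M ≤ t ∨ t ≤ -M) → u (t + τ) ≤ max C 0 * u t := by
  rw [absAtTopIn, eventually_inf_principal, eventually_sup] at h
  obtain ⟨h1, h2⟩ := h
  obtain ⟨M₁, hM₁⟩ := eventually_atTop.1 h1
  obtain ⟨M₂, hM₂⟩ := eventually_atBot.1 h2
  refine ⟨max M₁ (-M₂), ?_⟩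
  intro t ht hcase
  have hpos := hu2 t ht
  have hdiv : u (t + τ) / u t ≤ C := by
    rcases hcase with h|h
    · exact hM₁ t (le_trans (le_max_left _ _) h) ht
    · refine hM₂ t ?_ ht
      have := le_max_right M₁ (-M₂)
      linarith
  have h3 := (div_le_iff₀ hpos).1 hdiv
  calc u (t + τ) ≤ C * u t := h3
    _ ≤ max C 0 * u t := mul_le_mul_of_nonneg_right (le_max_left _ _) hpos.le

lemma tendsto_add_alongPi {c : ℝ} (hc : c ∈ tsPi T) :
    Tendsto (fun r => r + c) (alongPi T) (alongPi T) := by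
  rw [alongPi]
  refine tendsto_inf.2 ⟨?_, ?_⟩
  · exact (tendsto_atTop_add_const_right atTop c tendsto_id).mono_left inf_le_left
  · rw [tendsto_principal]
    exact eventually_inf_principal.2 (Eventually.of_forall fun r hr => pi_add hr hc)

lemma u_integrableOn (hT : APTimeScale T) {u : ℝ → ℝ}
    (hu3 : ∀ s : Set ℝ, Bornology.IsBounded s → IntegrableOn u (s ∩ T) (deltaMeasure T))
    {A : Set ℝ} (hA : Bornology.IsBounded A) : IntegrableOn u A (deltaMeasure T) := by
  show Integrable u ((deltaMeasure T).restrict A)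
  rw [restrict_inter_T hT A]
  exact hu3 A hA

lemma partI (hT : APTimeScale T) {u : ℝ → ℝ} (hu : UInfty T u)
    (hlim : ∀ τ ∈ tsPi T, ∃ C : ℝ, ∀ᶠ t in absAtTopIn T, u (t + τ) / u t ≤ C)
    {τ : ℝ} (hτ : τ ∈ tsPi T) (hτpos : 0 < τ) :
    ∃ C : ℝ, ∀ᶠ r in alongPi T, uQ T u (r + τ) / uQ T u r ≤ C := by
  obtain ⟨hu1, hu2, hu3, hu4, hu5⟩ := hu
  set μ := deltaMeasure T with hμdef
  have hTm : MeasurableSet T := measurableSet_T hT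
  have h0u : (0 : ℝ → ℝ) ≤ᵐ[μ] u := u_ae_nonneg hT hu2
  obtain ⟨C₁, hC₁⟩ := hlim τ hτ
  obtain ⟨M₁, hM₁⟩ := shift_bound hu2 hC₁
  obtain ⟨C₂, hC₂⟩ := hlim (-τ) (pi_neg hτ)
  obtain ⟨M₂, hM₂⟩ := shift_bound hu2 hC₂
  refine ⟨1 + max C₁ 0 + max C₂ 0, ?_⟩
  have hC₁0 : (0:ℝ) ≤ max C₁ 0 := le_max_right _ _
  have hC₂0 : (0:ℝ) ≤ max C₂ 0 := le_max_right _ _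
  set tb := tsT0 T with htbdef
  have hR : ∀ᶠ r in alongPi T, max (max (M₁ - tb + τ) (tb + M₂ + τ)) τ ≤ r :=
    (eventually_ge_atTop _).filter_mono inf_le_left
  have huQ1 : ∀ᶠ r in alongPi T, (1:ℝ) ≤ uQ T u r := hu5.eventually_ge_atTop 1
  filter_upwards [hR, huQ1] with r hr huQr
  have hrτ : τ ≤ r := le_trans (le_max_right _ _) hr
  have hrM₁ : M₁ - tb + τ ≤ r := le_trans (le_trans (le_max_left _ _) (le_max_left _ _)) hr
  have hrM₂ : tb + M₂ + τ ≤ r := le_trans (le_trans (le_max_right _ _) (le_max_left _ _)) hr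
  set a := tb - r with hadef
  set b := tb + r with hbdef
  -- interval decomposition
  have hset : Icc (a - τ) (b + τ) = Ico (a - τ) a ∪ (Icc a b ∪ Ioc b (b + τ)) := by
    ext x
    simp only [mem_Icc, mem_Ico, mem_union, mem_Ioc]
    constructor
    · rintro ⟨h1, h2⟩
      rcases lt_or_ge x a with h | h
      · exact Or.inl ⟨h1, h⟩
      · rcases le_or_gt x b with h' | h'
        · exact Or.inr (Or.inl ⟨h, h'⟩)
        · exact Or.inr (Or.inr ⟨h', h2⟩)
    · rintro (⟨h1, h2⟩ | ⟨h1, h2⟩ | ⟨h1, h2⟩) <;> constructor <;>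
        first
        | linarith
        | (have : a ≤ b := by rw [hadef, hbdef]; linarith
           linarith)
  have hQR : Qr T (r + τ) =
      (Ico (a - τ) a ∩ T) ∪ ((Icc a b ∩ T) ∪ (Ioc b (b + τ) ∩ T)) := by
    unfold Qr
    have h1 : tsT0 T - (r + τ) = a - τ := by rw [hadef, htbdef]; ring
    have h2 : tsT0 T + (r + τ) = b + τ := by rw [hbdef, htbdef]; ring
    rw [h1, h2, hset, union_inter_distrib_right, union_inter_distrib_right]
  -- integrabilities
  have hintL : IntegrableOn u (Ico (a - τ) a ∩ T) μ := hu3 _ (Metric.isBounded_Ico _ _)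
  have hintM : IntegrableOn u (Icc a b ∩ T) μ := hu3 _ (Metric.isBounded_Icc _ _)
  have hintR : IntegrableOn u (Ioc b (b + τ) ∩ T) μ := hu3 _ (Metric.isBounded_Ioc _ _)
  have hmeasM : MeasurableSet (Icc a b ∩ T) := measurableSet_Icc.inter hTm
  have hmeasR : MeasurableSet (Ioc b (b + τ) ∩ T) := measurableSet_Ioc.inter hTm
  have hd1 : Disjoint (Ico (a - τ) a ∩ T) ((Icc a b ∩ T) ∪ (Ioc b (b + τ) ∩ T)) := by
    rw [Set.disjoint_left]
    rintro x ⟨⟨_, hx2⟩, _⟩ (⟨⟨hx3, _⟩, _⟩ | ⟨⟨hx3, _⟩, _⟩)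
    · linarith
    · have hab : a ≤ b := by rw [hadef, hbdef]; linarith
      linarith
  have hd2 : Disjoint (Icc a b ∩ T) (Ioc b (b + τ) ∩ T) := by
    rw [Set.disjoint_left]
    rintro x ⟨⟨_, hx2⟩, _⟩ ⟨⟨hx3, _⟩, _⟩
    linarith
  have hmid : (∫ x in Icc a b ∩ T, u x ∂μ) = uQ T u r := rfl
  have hsplit : uQ T u (r + τ) =
      (∫ x in Ico (a - τ) a ∩ T, u x ∂μ) +
        ((∫ x in Icc a b ∩ T, u x ∂μ) + (∫ x in Ioc b (b + τ) ∩ T, u x ∂μ)) := by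
    show (∫ x in Qr T (r + τ), u x ∂μ) = _
    rw [hQR, setIntegral_union hd1 (hmeasM.union hmeasR) hintL (hintM.union hintR),
      setIntegral_union hd2 hmeasR hintM hintR]
  -- right strip
  have hpreR : (fun x : ℝ => x + τ) ⁻¹' (Ioc b (b + τ) ∩ T) = Ioc (b - τ) b ∩ T := by
    ext x
    simp only [mem_preimage, mem_inter_iff, mem_Ioc, mem_add_iff hτ]
    constructor <;> rintro ⟨⟨h1, h2⟩, h3⟩ <;> exact ⟨⟨by linarith, by linarith⟩, h3⟩
  have hIR : (∫ x in Ioc b (b + τ) ∩ T, u x ∂μ) ≤ max C₁ 0 * uQ T u r := by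
    rw [hμdef, setIntegral_shift hT hτ u (Ioc b (b + τ) ∩ T), hpreR, ← hμdef]
    have hint1 : IntegrableOn (fun x => u (x + τ)) (Ioc (b - τ) b ∩ T) μ := by
      rw [← hpreR]
      exact (integrableOn_shift hT hτ hmeasR).2 hintR
    have hint2 : IntegrableOn (fun x => max C₁ 0 * u x) (Ioc (b - τ) b ∩ T) μ :=
      (hu3 _ (Metric.isBounded_Ioc _ _)).const_mul _
    have hmeas' : MeasurableSet (Ioc (b - τ) b ∩ T) := measurableSet_Ioc.inter hTm
    have hpt : ∀ x ∈ Ioc (b - τ) b ∩ T, u (x + τ) ≤ max C₁ 0 * u x := by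
      rintro x ⟨⟨hx1, hx2⟩, hxT⟩
      refine hM₁ x hxT (Or.inl ?_)
      rw [hbdef] at hx1
      linarith
    calc (∫ x in Ioc (b - τ) b ∩ T, u (x + τ) ∂μ)
        ≤ ∫ x in Ioc (b - τ) b ∩ T, max C₁ 0 * u x ∂μ :=
          setIntegral_mono_on hint1 hint2 hmeas' hpt
      _ = max C₁ 0 * ∫ x in Ioc (b - τ) b ∩ T, u x ∂μ := integral_const_mul _ _
      _ ≤ max C₁ 0 * uQ T u r := by
          refine mul_le_mul_of_nonneg_left ?_ hC₁0
          rw [← hmid]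
          refine setIntegral_mono_set hintM (ae_restrict_of_ae h0u) ?_
          refine HasSubset.Subset.eventuallyLE ?_
          rintro x ⟨⟨hx1, hx2⟩, hxT⟩
          refine ⟨⟨?_, hx2⟩, hxT⟩
          rw [hadef]; rw [hbdef] at hx1; linarith
  -- left strip
  have hpreL : (fun x : ℝ => x + -τ) ⁻¹' (Ico (a - τ) a ∩ T) = Ico a (a + τ) ∩ T := by
    ext x
    simp only [mem_preimage, mem_inter_iff, mem_Ico, mem_add_iff (pi_neg hτ)]
    constructor <;> rintro ⟨⟨h1, h2⟩, h3⟩ <;> exact ⟨⟨by linarith, by linarith⟩, h3⟩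
  have hIL : (∫ x in Ico (a - τ) a ∩ T, u x ∂μ) ≤ max C₂ 0 * uQ T u r := by
    rw [hμdef, setIntegral_shift hT (pi_neg hτ) u (Ico (a - τ) a ∩ T), hpreL, ← hμdef]
    have hmeasL : MeasurableSet (Ico (a - τ) a ∩ T) := measurableSet_Ico.inter hTm
    have hint1 : IntegrableOn (fun x => u (x + -τ)) (Ico a (a + τ) ∩ T) μ := by
      rw [← hpreL]
      exact (integrableOn_shift hT (pi_neg hτ) hmeasL).2 hintL
    have hint2 : IntegrableOn (fun x => max C₂ 0 * u x) (Ico a (a + τ) ∩ T) μ :=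
      (hu3 _ (Metric.isBounded_Ico _ _)).const_mul _
    have hmeas' : MeasurableSet (Ico a (a + τ) ∩ T) := measurableSet_Ico.inter hTm
    have hpt : ∀ x ∈ Ico a (a + τ) ∩ T, u (x + -τ) ≤ max C₂ 0 * u x := by
      rintro x ⟨⟨hx1, hx2⟩, hxT⟩
      refine hM₂ x hxT (Or.inr ?_)
      rw [hadef] at hx2
      linarith
    calc (∫ x in Ico a (a + τ) ∩ T, u (x + -τ) ∂μ)
        ≤ ∫ x in Ico a (a + τ) ∩ T, max C₂ 0 * u x ∂μ :=
          setIntegral_mono_on hint1 hint2 hmeas' hpt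
      _ = max C₂ 0 * ∫ x in Ico a (a + τ) ∩ T, u x ∂μ := integral_const_mul _ _
      _ ≤ max C₂ 0 * uQ T u r := by
          refine mul_le_mul_of_nonneg_left ?_ hC₂0
          rw [← hmid]
          refine setIntegral_mono_set hintM (ae_restrict_of_ae h0u) ?_
          refine HasSubset.Subset.eventuallyLE ?_
          rintro x ⟨⟨hx1, hx2⟩, hxT⟩
          refine ⟨⟨hx1, ?_⟩, hxT⟩
          rw [hbdef]; rw [hadef] at hx2; linarith
  have hpos : (0:ℝ) < uQ T u r := lt_of_lt_of_le one_pos huQr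
  rw [div_le_iff₀ hpos]
  rw [hsplit, hmid]
  nlinarith [hIL, hIR, huQr]

end TSaux


/-- If `u ∈ U_∞` and for every `τ ∈ Π` the limit superior of `u(t+τ)/u(t)` as `|t| → ∞`, `t ∈ T`,
is finite, then (i) for every `τ ∈ Π`, `τ > 0`, the limit superior of `u(Q_{r+τ})/u(Q_r)`
as `r → ∞` along `Π` is finite, and (ii) `PAP₀(T, ℝⁿ, u)` is translation invariant. -/
theorem pap0_translation_invariant {n : ℕ} (T : Set ℝ) (hT : APTimeScale T)
    (u : ℝ → ℝ) (hu : UInfty T u)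
    (hlim : ∀ τ ∈ tsPi T, ∃ C : ℝ, ∀ᶠ t in absAtTopIn T, u (t + τ) / u t ≤ C) :
    (∀ τ ∈ tsPi T, 0 < τ →
      ∃ C : ℝ, ∀ᶠ r in alongPi T, uQ T u (r + τ) / uQ T u r ≤ C) ∧
    (∀ φ : ℝ → Fin n → ℝ, PAP0fun T u φ → ∀ τ ∈ tsPi T,
      PAP0fun T u (fun t => φ (t - τ))) := by
  constructor
  · intro τ hτ hτpos
    exact TSaux.partI hT hu hlim hτ hτpos
  · intro φ hφ τ hτ
    rcases eq_or_ne τ 0 with rfl | hτne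
    · simpa using hφ
    obtain ⟨⟨hcont, CB, hCB⟩, htend⟩ := hφ
    have hcont' : ContinuousOn (fun t => φ (t - τ)) T := by
      exact ContinuousOn.comp hcont
        ((continuous_id.sub continuous_const).continuousOn) (fun t ht => (hτ t ht).2)
    refine ⟨⟨hcont', CB, fun t ht => hCB _ ((hτ t ht).2)⟩, ?_⟩
    -- notation
    obtain ⟨hu1, hu2, hu3, hu4, hu5⟩ := id hu
    set μ := deltaMeasure T with hμdef
    have hTm : MeasurableSet T := TSaux.measurableSet_T hT
    have h0u : (0 : ℝ → ℝ) ≤ᵐ[μ] u := TSaux.u_ae_nonneg hT hu2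
    have h0uτ : (0 : ℝ → ℝ) ≤ᵐ[μ] fun x => u (x + τ) := TSaux.u_shift_ae_nonneg hT hu2 hτ
    set τ' := |τ| with hτ'def
    have hτ'pi : τ' ∈ tsPi T := TSaux.pi_abs hτ
    have hτ'pos : 0 < τ' := abs_pos.2 hτne
    obtain ⟨Cr, hCr⟩ := TSaux.partI hT hu hlim hτ'pi hτ'pos
    obtain ⟨C₁, hC₁⟩ := hlim τ hτ
    obtain ⟨M₀, hM⟩ := TSaux.shift_bound hu2 hC₁
    set C₁' := max C₁ 0 with hC₁'def
    have hC₁'0 : (0:ℝ) ≤ C₁' := le_max_right _ _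
    set B := max CB 0 with hBdef
    have hB0 : (0:ℝ) ≤ B := le_max_right _ _
    have hBφ : ∀ t ∈ T, ‖φ t‖ ≤ B := fun t ht => le_trans (hCB t ht) (le_max_left _ _)
    set tb := tsT0 T with htbdef
    -- the constant K
    have hKpre : (fun x : ℝ => x + τ) ⁻¹' (Icc (-M₀ + τ) (M₀ + τ) ∩ T) = Icc (-M₀) M₀ ∩ T := by
      ext x
      simp only [mem_preimage, mem_inter_iff, mem_Icc, TSaux.mem_add_iff hτ]
      constructor <;> rintro ⟨⟨h1, h2⟩, h3⟩ <;> exact ⟨⟨by linarith, by linarith⟩, h3⟩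
    have hKint : IntegrableOn (fun x => u (x + τ)) (Icc (-M₀) M₀ ∩ T) μ := by
      rw [← hKpre]
      exact (TSaux.integrableOn_shift hT hτ (measurableSet_Icc.inter hTm)).2
        (hu3 _ (Metric.isBounded_Icc _ _))
    set K := ∫ x in Icc (-M₀) M₀ ∩ T, u (x + τ) ∂μ with hKdef
    have hK0 : 0 ≤ K := integral_nonneg_of_ae (ae_restrict_of_ae h0uτ)
    -- measurability / integrability helpers
    have hrle : ∀ A : Set ℝ, μ.restrict A ≤ μ.restrict T := by
      intro A
      rw [hμdef, TSaux.restrict_inter_T hT A]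
      exact Measure.restrict_mono inter_subset_right le_rfl
    have hφm : AEStronglyMeasurable (fun t => ‖φ t‖) (μ.restrict T) :=
      (hcont.norm).aestronglyMeasurable hTm
    have hφmA : ∀ A : Set ℝ, AEStronglyMeasurable (fun t => ‖φ t‖) (μ.restrict A) :=
      fun A => hφm.mono_measure (hrle A)
    have h0g : (0 : ℝ → ℝ) ≤ᵐ[μ] fun x => ‖φ x‖ * u x :=
      h0u.mono fun x hx => mul_nonneg (norm_nonneg _) hx
    have hgint : ∀ s : Set ℝ, Bornology.IsBounded s → MeasurableSet s →
        IntegrableOn (fun x => ‖φ x‖ * u x) (s ∩ T) μ := by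
      intro s hs hsm
      refine Integrable.mono' ((hu3 s hs).const_mul B)
        ((hφmA _).mul (hu1.aestronglyMeasurable)) ?_
      filter_upwards [ae_restrict_mem (hsm.inter hTm)] with x hx
      have hxT : x ∈ T := hx.2
      have hux : 0 ≤ u x := (hu2 x hxT).le
      rw [Real.norm_eq_abs, abs_mul, abs_of_nonneg (norm_nonneg _), abs_of_nonneg hux]
      exact mul_le_mul_of_nonneg_right (hBφ x hxT) hux
    have hQrint : ∀ ρ : ℝ, IntegrableOn (fun x => ‖φ x‖ * u x) (Qr T ρ) μ :=
      fun ρ => hgint _ (Metric.isBounded_Icc _ _) measurableSet_Icc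
    have hI0 : ∀ ρ : ℝ, 0 ≤ ∫ s in Qr T ρ, ‖φ s‖ * u s ∂μ :=
      fun ρ => integral_nonneg_of_ae (ae_restrict_of_ae h0g)
    have huQ0 : ∀ ρ : ℝ, 0 ≤ uQ T u ρ :=
      fun ρ => integral_nonneg_of_ae (ae_restrict_of_ae h0u)
    -- goal
    show Tendsto (fun r => (uQ T u r)⁻¹ * ∫ t in Qr T r, ‖φ (t - τ)‖ * u t ∂μ)
      (alongPi T) (nhds 0)
    -- eventual bound
    have hbound : ∀ᶠ r in alongPi T,
        (uQ T u r)⁻¹ * (∫ t in Qr T r, ‖φ (t - τ)‖ * u t ∂μ) ≤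
          C₁' * max Cr 0 *
            ((uQ T u (r + τ'))⁻¹ * ∫ s in Qr T (r + τ'), ‖φ s‖ * u s ∂μ) +
          B * K * (uQ T u r)⁻¹ := by
      filter_upwards [hCr, (hu5.comp (TSaux.tendsto_add_alongPi hτ'pi)).eventually_ge_atTop 1,
        hu5.eventually_ge_atTop 1] with r hr1 hr2 hr3
      have hr2' : (1:ℝ) ≤ uQ T u (r + τ') := hr2
      set pre := Icc (tb - r - τ) (tb + r - τ) ∩ T with hpredef
      have hprem : MeasurableSet pre := measurableSet_Icc.inter hTm
      have hpreQ : (fun x : ℝ => x + τ) ⁻¹' (Qr T r) = pre := by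
        show (fun x : ℝ => x + τ) ⁻¹' (Icc (tsT0 T - r) (tsT0 T + r) ∩ T) = pre
        rw [hpredef]
        ext x
        simp only [mem_preimage, mem_inter_iff, mem_Icc, TSaux.mem_add_iff hτ, ← htbdef]
        constructor <;> rintro ⟨⟨h1, h2⟩, h3⟩ <;> exact ⟨⟨by linarith, by linarith⟩, h3⟩
      have hstep1 : (∫ t in Qr T r, ‖φ (t - τ)‖ * u t ∂μ) =
          ∫ s in pre, ‖φ s‖ * u (s + τ) ∂μ := by
        rw [hμdef, TSaux.setIntegral_shift hT hτ (fun t => ‖φ (t - τ)‖ * u t) (Qr T r)]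
        rw [← hμdef, hpreQ]
        simp only [add_sub_cancel_right]
      -- integrability of the integrand on pre
      have hpreint_u : IntegrableOn (fun x => u (x + τ)) pre μ := by
        rw [← hpreQ]
        exact (TSaux.integrableOn_shift hT hτ
          (measurableSet_Icc.inter hTm)).2 (hu3 _ (Metric.isBounded_Icc _ _))
      have hpreint : IntegrableOn (fun s => ‖φ s‖ * u (s + τ)) pre μ := by
        refine Integrable.mono' (hpreint_u.const_mul B)
          ((hφmA _).mul ((hu1.comp (measurable_add_const τ)).aestronglyMeasurable)) ?_
        filter_upwards [ae_restrict_mem hprem] with x hx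
        have hxT : x ∈ T := hx.2
        have hux : 0 ≤ u (x + τ) := (hu2 _ ((hτ x hxT).1)).le
        rw [Real.norm_eq_abs, abs_mul, abs_of_nonneg (norm_nonneg _), abs_of_nonneg hux]
        exact mul_le_mul_of_nonneg_right (hBφ x hxT) hux
      -- split pre
      set Pin := pre ∩ Icc (-M₀) M₀ with hPindef
      set Pout := pre \ Icc (-M₀) M₀ with hPoutdef
      have hPoutm : MeasurableSet Pout := hprem.diff measurableSet_Icc
      have hdisj : Disjoint Pin Pout := by
        rw [Set.disjoint_left]
        rintro x ⟨_, hx2⟩ ⟨_, hx3⟩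
        exact hx3 hx2
      have hunion : Pin ∪ Pout = pre := by
        rw [hPindef, hPoutdef]
        exact inter_union_diff pre _
      have hsplit : (∫ s in pre, ‖φ s‖ * u (s + τ) ∂μ) =
          (∫ s in Pin, ‖φ s‖ * u (s + τ) ∂μ) + ∫ s in Pout, ‖φ s‖ * u (s + τ) ∂μ := by
        rw [← hunion, setIntegral_union hdisj hPoutm
          (hpreint.mono_set (hunion ▸ subset_union_left))
          (hpreint.mono_set (hunion ▸ subset_union_right))]
      -- bound on Pin
      have hPinm : MeasurableSet Pin := hprem.inter measurableSet_Icc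
      have hin : (∫ s in Pin, ‖φ s‖ * u (s + τ) ∂μ) ≤ B * K := by
        calc (∫ s in Pin, ‖φ s‖ * u (s + τ) ∂μ)
            ≤ ∫ s in Pin, B * u (s + τ) ∂μ := by
              refine setIntegral_mono_on
                (hpreint.mono_set (hunion ▸ subset_union_left))
                ((hpreint_u.mono_set (hunion ▸ subset_union_left)).const_mul B) hPinm ?_
              rintro x ⟨hxpre, _⟩
              exact mul_le_mul_of_nonneg_right (hBφ x hxpre.2)
                (hu2 _ ((hτ x hxpre.2).1)).le
          _ = B * ∫ s in Pin, u (s + τ) ∂μ := integral_const_mul _ _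
          _ ≤ B * K := by
              refine mul_le_mul_of_nonneg_left ?_ hB0
              rw [hKdef]
              refine setIntegral_mono_set hKint (ae_restrict_of_ae h0uτ) ?_
              refine HasSubset.Subset.eventuallyLE ?_
              rintro x ⟨hxpre, hxI⟩
              exact ⟨hxI, hxpre.2⟩
      -- bound on Pout
      have hsubQ : Pout ⊆ Qr T (r + τ') := by
        rintro x ⟨hxpre, _⟩
        obtain ⟨⟨hx1, hx2⟩, hxT⟩ := hxpre
        refine ⟨?_, hxT⟩
        have ha1 : τ ≤ τ' := le_abs_self τ
        have ha2 : -τ' ≤ τ := neg_abs_le τ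
        constructor
        · rw [← htbdef]; linarith
        · rw [← htbdef]; linarith
      have hout : (∫ s in Pout, ‖φ s‖ * u (s + τ) ∂μ) ≤
          C₁' * ∫ s in Qr T (r + τ'), ‖φ s‖ * u s ∂μ := by
        have hgPout : IntegrableOn (fun x => ‖φ x‖ * u x) Pout μ :=
          (hQrint (r + τ')).mono_set hsubQ
        calc (∫ s in Pout, ‖φ s‖ * u (s + τ) ∂μ)
            ≤ ∫ s in Pout, C₁' * (‖φ s‖ * u s) ∂μ := by
              refine setIntegral_mono_on
                (hpreint.mono_set (hunion ▸ subset_union_right))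
                (hgPout.const_mul C₁') hPoutm ?_
              rintro x ⟨hxpre, hxnI⟩
              have hxT : x ∈ T := hxpre.2
              have hcase : M₀ ≤ x ∨ x ≤ -M₀ := by
                rcases le_or_gt x M₀ with h | h
                · rcases le_or_gt (-M₀) x with h' | h'
                  · exact absurd ⟨h', h⟩ hxnI
                  · exact Or.inr h'.le
                · exact Or.inl h.le
              have := hM x hxT hcase
              calc ‖φ x‖ * u (x + τ) ≤ ‖φ x‖ * (C₁' * u x) :=
                    mul_le_mul_of_nonneg_left this (norm_nonneg _)
                _ = C₁' * (‖φ x‖ * u x) := by ring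
          _ = C₁' * ∫ s in Pout, ‖φ s‖ * u s ∂μ := integral_const_mul _ _
          _ ≤ C₁' * ∫ s in Qr T (r + τ'), ‖φ s‖ * u s ∂μ := by
              refine mul_le_mul_of_nonneg_left ?_ hC₁'0
              exact setIntegral_mono_set (hQrint (r + τ')) (ae_restrict_of_ae h0g)
                (HasSubset.Subset.eventuallyLE hsubQ)
      -- assemble
      set X := ∫ s in Qr T (r + τ'), ‖φ s‖ * u s ∂μ with hXdef
      have hchain : (∫ t in Qr T r, ‖φ (t - τ)‖ * u t ∂μ) ≤ C₁' * X + B * K := by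
        rw [hstep1, hsplit]
        linarith [hin, hout]
      have hX0 : 0 ≤ X := hI0 (r + τ')
      have hne1 : uQ T u r ≠ 0 := by linarith
      have hne2 : uQ T u (r + τ') ≠ 0 := by linarith
      have h1 : (uQ T u r)⁻¹ * (∫ t in Qr T r, ‖φ (t - τ)‖ * u t ∂μ) ≤
          (uQ T u r)⁻¹ * (C₁' * X + B * K) :=
        mul_le_mul_of_nonneg_left hchain (inv_nonneg.2 (huQ0 r))
      have h2 : (uQ T u r)⁻¹ * (C₁' * X + B * K) =
          C₁' * (uQ T u (r + τ') / uQ T u r * ((uQ T u (r + τ'))⁻¹ * X)) +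
            B * K * (uQ T u r)⁻¹ := by
        field_simp
      have hY0 : 0 ≤ (uQ T u (r + τ'))⁻¹ * X :=
        mul_nonneg (inv_nonneg.2 (huQ0 _)) hX0
      have h3 : uQ T u (r + τ') / uQ T u r * ((uQ T u (r + τ'))⁻¹ * X) ≤
          max Cr 0 * ((uQ T u (r + τ'))⁻¹ * X) :=
        mul_le_mul_of_nonneg_right (le_trans hr1 (le_max_left _ _)) hY0
      calc (uQ T u r)⁻¹ * (∫ t in Qr T r, ‖φ (t - τ)‖ * u t ∂μ)
          ≤ (uQ T u r)⁻¹ * (C₁' * X + B * K) := h1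
        _ = C₁' * (uQ T u (r + τ') / uQ T u r * ((uQ T u (r + τ'))⁻¹ * X)) +
            B * K * (uQ T u r)⁻¹ := h2
        _ ≤ C₁' * (max Cr 0 * ((uQ T u (r + τ'))⁻¹ * X)) + B * K * (uQ T u r)⁻¹ := by
            have := mul_le_mul_of_nonneg_left h3 hC₁'0
            linarith
        _ = C₁' * max Cr 0 * ((uQ T u (r + τ'))⁻¹ * X) + B * K * (uQ T u r)⁻¹ := by
            ring
    -- squeeze
    have hnonneg : ∀ r : ℝ, 0 ≤ (uQ T u r)⁻¹ * ∫ t in Qr T r, ‖φ (t - τ)‖ * u t ∂μ := by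
      intro r
      refine mul_nonneg (inv_nonneg.2 (huQ0 r)) (integral_nonneg_of_ae (ae_restrict_of_ae ?_))
      exact h0u.mono fun x hx => mul_nonneg (norm_nonneg _) hx
    have hg0 : Tendsto (fun r =>
        C₁' * max Cr 0 * ((uQ T u (r + τ'))⁻¹ * ∫ s in Qr T (r + τ'), ‖φ s‖ * u s ∂μ) +
          B * K * (uQ T u r)⁻¹) (alongPi T) (nhds 0) := by
      have ht1 : Tendsto (fun r =>
          (uQ T u (r + τ'))⁻¹ * ∫ s in Qr T (r + τ'), ‖φ s‖ * u s ∂μ)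
          (alongPi T) (nhds 0) := htend.comp (TSaux.tendsto_add_alongPi hτ'pi)
      have ht2 : Tendsto (fun r : ℝ => (uQ T u r)⁻¹) (alongPi T) (nhds 0) :=
        hu5.inv_tendsto_atTop
      have := (ht1.const_mul (C₁' * max Cr 0)).add (ht2.const_mul (B * K))
      simpa using this
    exact squeeze_zero' (Eventually.of_forall hnonneg) hbound hg0
end

section
/- Let 𝕋 be an almost periodic time scale (Π ≠ {0}) and u ∈ U_∞^Inv. If (f_m)_{m∈ℕ} ⊂ PAP(𝕋,ℝⁿ,u) and f : 𝕋 → ℝⁿ satisfy ‖f_m − f‖_∞ → 0 as m → ∞, then f ∈ PAP(𝕋,ℝⁿ,u). -/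
open MeasureTheory Filter Set

/-!
Along a subsequence write `f_j = P_j + Q_j` with `P_j` almost periodic, `Q_j` ergodic and
`‖f_j - g‖ ≤ 2⁻ʲ` on `T`. The almost periodic increment `z_j = P_{j+1} - P_j` then lies within
`c_j = 2⁻ʲ + 2⁻ʲ⁻¹` of the ergodic function `Q_j - Q_{j+1}` on `T`. Soft-thresholding `z_j` at
level `c_j` splits it as `(z_j - y_j) + y_j` with `‖z_j - y_j‖ ≤ c_j` everywhere and
`‖y_j‖ ≤ ‖Q_j - Q_{j+1}‖` on `T`, so `y_j` is both almost periodic and ergodic. Hence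
`p = P_0 + ∑ⱼ (z_j - y_j)` is a uniform limit of almost periodic functions, while `g - p` is the
uniform limit of the ergodic functions `Q_J + ∑_{j<J} y_j`; both classes are closed under uniform
limits, and `g = p + (g - p)`.
-/

open Topology

def tsPiAddSubgroup (T : Set ℝ) : AddSubgroup ℝ where
  carrier := tsPi T
  zero_mem' := fun t ht => by simpa using ht
  add_mem' := fun {a b} ha hb t ht =>
    ⟨by simpa only [add_assoc] using (hb _ (ha t ht).1).1,
      by simpa only [sub_add_eq_sub_sub] using (hb _ (ha t ht).2).2⟩
  neg_mem' := fun {a} ha t ht => by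
    simpa only [sub_neg_eq_add, ← sub_eq_add_neg] using (ha t ht).symm

lemma exists_pos_mem_tsPi {T : Set ℝ} (h : ∃ τ ∈ tsPi T, τ ≠ 0) : ∃ τ ∈ tsPi T, 0 < τ := by
  obtain ⟨τ, hτ, hτ0⟩ := h
  rcases hτ0.lt_or_gt with hneg | hpos
  · exact ⟨-τ, (tsPiAddSubgroup T).neg_mem hτ, neg_pos.2 hneg⟩
  · exact ⟨τ, hτ, hpos⟩

lemma exists_mem_tsPi_mem_Icc {T : Set ℝ} {τ : ℝ} (hτ : τ ∈ tsPi T) (hτ0 : 0 < τ) (x : ℝ) :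
    ∃ σ ∈ tsPi T, σ ∈ Icc x (x + τ) := by
  refine ⟨⌈x / τ⌉ * τ, zsmul_eq_mul τ ⌈x / τ⌉ ▸ (tsPiAddSubgroup T).zsmul_mem hτ _, ?_, ?_⟩
  · rw [← div_le_iff₀ hτ0]
    exact Int.le_ceil _
  · have := mul_le_mul_of_nonneg_right (Int.ceil_lt_add_one (x / τ)).le hτ0.le
    rwa [add_mul, div_mul_cancel₀ _ hτ0.ne', one_mul] at this

/- An almost periodic `f` has, for every `ε`, a finite `ε`-net of its translates `f (· + τ)`,
`τ ∈ Π`, for the uniform distance on `T`; nets for `f` and `g` combine into a net for `(f, g)`,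
and such nets give back relatively dense almost periods. This yields common almost periods. -/
def IsTranslateNet {E : Type*} [NormedAddCommGroup E] (T : Set ℝ) (f : ℝ → E) (ε : ℝ)
    (R : Set ℝ) : Prop :=
  R.Finite ∧ R ⊆ tsPi T ∧ ∀ τ ∈ tsPi T, ∃ r ∈ R, ∀ t ∈ T, ‖f (t + τ) - f (t + r)‖ ≤ ε

namespace APfun

variable {T : Set ℝ} {E F : Type*} [NormedAddCommGroup E] [NormedAddCommGroup F] {f : ℝ → E}

lemma exists_translate_mem_Icc (hf : APfun T f) {ε : ℝ} (hε : 0 < ε) :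
    ∃ l > 0, ∀ t, ∃ τ ∈ tsPi T, t + τ ∈ Icc 0 l ∧ ∀ s ∈ T, ‖f (s + τ) - f s‖ < ε := by
  obtain ⟨l, hl, H⟩ := hf.2 ε hε
  refine ⟨l, hl, fun t => ?_⟩
  obtain ⟨τ, hτ, hτI, hτf⟩ := H (-t)
  exact ⟨τ, hτ, ⟨by linarith [hτI.1], by linarith [hτI.2]⟩, hτf⟩

lemma exists_bound (hT : IsClosed T) (hf : APfun T f) : ∃ C, ∀ t ∈ T, ‖f t‖ ≤ C := by
  obtain ⟨l, -, H⟩ := hf.exists_translate_mem_Icc one_pos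
  obtain ⟨C, hC⟩ := (isCompact_Icc.inter_left hT).exists_bound_of_continuousOn
    (hf.1.mono (inter_subset_left (t := Icc 0 l)))
  refine ⟨C + 1, fun t ht => ?_⟩
  obtain ⟨τ, hτ, hτI, hτf⟩ := H t
  have := norm_sub_norm_le (f t) (f (t + τ))
  rw [norm_sub_rev] at this
  linarith [hC _ ⟨(hτ t ht).1, hτI⟩, hτf t ht]

lemma uniformContinuousOn (hT : IsClosed T) (hf : APfun T f) : UniformContinuousOn f T := by
  rw [Metric.uniformContinuousOn_iff]
  intro ε hε
  obtain ⟨l, -, H⟩ := hf.exists_translate_mem_Icc (by positivity : 0 < ε / 3)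
  have hK := (isCompact_Icc.inter_left hT).uniformContinuousOn_of_continuous
    (hf.1.mono (inter_subset_left (t := Icc (-1) (l + 1))))
  obtain ⟨δ, hδ, hKδ⟩ := Metric.uniformContinuousOn_iff.1 hK (ε / 3) (by positivity)
  refine ⟨min δ 1, by positivity, fun s hs t ht hst => ?_⟩
  obtain ⟨τ, hτ, hτI, hτf⟩ := H t
  have hst1 := abs_lt.1 (show |s - t| < 1 by
    rw [← Real.dist_eq]; exact hst.trans_le (min_le_right _ _))
  have hmid := hKδ (s + τ) ⟨(hτ s hs).1, by constructor <;> linarith [hτI.1, hτI.2]⟩ (t + τ)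
    ⟨(hτ t ht).1, by constructor <;> linarith [hτI.1, hτI.2]⟩
    (by rw [dist_add_right]; exact hst.trans_le (min_le_left _ _))
  rw [dist_eq_norm] at hmid ⊢
  calc ‖f s - f t‖ = ‖-(f (s + τ) - f s) + (f (s + τ) - f (t + τ)) + (f (t + τ) - f t)‖ := by
        abel_nf
    _ ≤ ‖f (s + τ) - f s‖ + ‖f (s + τ) - f (t + τ)‖ + ‖f (t + τ) - f t‖ := by
        rw [← norm_neg (f (s + τ) - f s)]
        exact norm_add₃_le
    _ < ε := by linarith [hτf s hs, hτf t ht]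

lemma exists_isTranslateNet (hT : IsClosed T) (hf : APfun T f) {ε : ℝ} (hε : 0 < ε) :
    ∃ R, IsTranslateNet T f ε R := by
  obtain ⟨l, -, H⟩ := hf.2 (ε / 2) (by positivity)
  obtain ⟨δ, hδ, hδf⟩ :=
    Metric.uniformContinuousOn_iff.1 (hf.uniformContinuousOn hT) (ε / 2) (by positivity)
  obtain ⟨R, hRsub, hRfin, hcover⟩ := Metric.finite_approx_of_totallyBounded
    ((totallyBounded_Icc 0 l).subset (inter_subset_right (s := tsPi T))) δ hδ
  refine ⟨R, hRfin, fun r hr => (hRsub hr).1, fun τ hτ => ?_⟩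
  obtain ⟨s, hs, hsI, hsf⟩ := H (τ - l)
  have hρ : τ - s ∈ tsPi T ∩ Icc 0 l :=
    ⟨(tsPiAddSubgroup T).sub_mem hτ hs, by constructor <;> linarith [hsI.1, hsI.2]⟩
  obtain ⟨r, hr, hρr⟩ := mem_iUnion₂.1 (hcover hρ)
  refine ⟨r, hr, fun t ht => ?_⟩
  have htρ : t + (τ - s) ∈ T := (hρ.1 t ht).1
  have h1 := hsf _ htρ
  have h2 := hδf _ htρ _ ((hRsub hr).1 t ht).1 (by rwa [dist_add_left])
  rw [show t + (τ - s) + s = t + τ by ring] at h1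
  rw [dist_eq_norm] at h2
  linarith [norm_sub_le_norm_sub_add_norm_sub (f (t + τ)) (f (t + (τ - s))) (f (t + r))]

end APfun

lemma IsTranslateNet.prodMk {T : Set ℝ} {E F : Type*} [NormedAddCommGroup E]
    [NormedAddCommGroup F] {f : ℝ → E} {g : ℝ → F} {ε : ℝ} {R₁ R₂ : Set ℝ}
    (hf : IsTranslateNet T f ε R₁) (hg : IsTranslateNet T g ε R₂) :
    ∃ R, IsTranslateNet T (fun t => (f t, g t)) (2 * ε) R := by
  set S := {p ∈ R₁ ×ˢ R₂ | ∃ β ∈ tsPi T, (∀ t ∈ T, ‖f (t + β) - f (t + p.1)‖ ≤ ε) ∧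
    ∀ t ∈ T, ‖g (t + β) - g (t + p.2)‖ ≤ ε}
  have : Finite S := ((hf.1.prod hg.1).subset (sep_subset _ _)).to_subtype
  choose β hβ hβf hβg using fun p : S => p.2.2
  refine ⟨range β, finite_range β, range_subset_iff.2 hβ, fun τ hτ => ?_⟩
  obtain ⟨a, ha, hfa⟩ := hf.2.2 τ hτ
  obtain ⟨b, hb, hgb⟩ := hg.2.2 τ hτ
  let p : S := ⟨(a, b), ⟨ha, hb⟩, τ, hτ, hfa, hgb⟩
  refine ⟨β p, mem_range_self p, fun t ht => norm_prod_le_iff.2 ⟨?_, ?_⟩⟩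
  · show ‖f (t + τ) - f (t + β p)‖ ≤ 2 * ε
    have := norm_sub_le_norm_sub_add_norm_sub (f (t + τ)) (f (t + a)) (f (t + β p))
    rw [norm_sub_rev (f (t + a))] at this
    linarith [hfa t ht, hβf p t ht]
  · show ‖g (t + τ) - g (t + β p)‖ ≤ 2 * ε
    have := norm_sub_le_norm_sub_add_norm_sub (g (t + τ)) (g (t + b)) (g (t + β p))
    rw [norm_sub_rev (g (t + b))] at this
    linarith [hgb t ht, hβg p t ht]

namespace APfun

variable {T : Set ℝ} {E F : Type*} [NormedAddCommGroup E] [NormedAddCommGroup F]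

lemma of_isTranslateNet (hPi : ∃ τ ∈ tsPi T, τ ≠ 0) {f : ℝ → E} (hc : ContinuousOn f T)
    (hnet : ∀ ε > 0, ∃ R, IsTranslateNet T f ε R) : APfun T f := by
  obtain ⟨τ₀, hτ₀, hτ₀pos⟩ := exists_pos_mem_tsPi hPi
  refine ⟨hc, fun ε hε => ?_⟩
  obtain ⟨R, hRfin, hRPi, hR⟩ := hnet (ε / 2) (by positivity)
  obtain ⟨a, ha⟩ := hRfin.bddBelow
  obtain ⟨b, hb⟩ := hRfin.bddAbove
  refine ⟨|b - a| + τ₀, by positivity, fun x => ?_⟩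
  obtain ⟨α, hα, hαI⟩ := exists_mem_tsPi_mem_Icc hτ₀ hτ₀pos (x + b)
  obtain ⟨r, hr, hαr⟩ := hR α hα
  refine ⟨α - r, (tsPiAddSubgroup T).sub_mem hα (hRPi hr), ⟨?_, ?_⟩, fun t ht => ?_⟩
  · linarith [hb hr, hαI.1]
  · linarith [ha hr, hαI.2, le_abs_self (b - a)]
  · have := hαr (t - r) (hRPi hr t ht).2
    rw [sub_add_cancel, show t - r + α = t + (α - r) by ring] at this
    linarith

lemma const (hPi : ∃ τ ∈ tsPi T, τ ≠ 0) (c : E) : APfun T (fun _ => c) :=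
  of_isTranslateNet hPi continuousOn_const fun _ hε =>
    ⟨{0}, finite_singleton 0, singleton_subset_iff.2 (tsPiAddSubgroup T).zero_mem,
      fun _ _ => ⟨0, rfl, fun _ _ => by simpa using hε.le⟩⟩

lemma prodMk (hT : IsClosed T) (hPi : ∃ τ ∈ tsPi T, τ ≠ 0) {f : ℝ → E} {g : ℝ → F}
    (hf : APfun T f) (hg : APfun T g) : APfun T (fun t => (f t, g t)) := by
  refine of_isTranslateNet hPi (hf.1.prodMk hg.1) fun ε hε => ?_
  obtain ⟨R₁, h₁⟩ := hf.exists_isTranslateNet hT (half_pos hε)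
  obtain ⟨R₂, h₂⟩ := hg.exists_isTranslateNet hT (half_pos hε)
  simpa only [mul_div_cancel₀ ε two_ne_zero] using h₁.prodMk h₂

lemma comp_uniformContinuousOn {f : ℝ → E} {θ : E → F} {s : Set E}
    (hθ : UniformContinuousOn θ s) (hfs : MapsTo f T s) (hf : APfun T f) :
    APfun T (θ ∘ f) := by
  refine ⟨hθ.continuousOn.comp hf.1 hfs, fun ε hε => ?_⟩
  obtain ⟨δ, hδ, hθδ⟩ := Metric.uniformContinuousOn_iff.1 hθ ε hε
  obtain ⟨l, hl, H⟩ := hf.2 δ hδ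
  refine ⟨l, hl, fun x => ?_⟩
  obtain ⟨τ, hτ, hτI, hτf⟩ := H x
  refine ⟨τ, hτ, hτI, fun t ht => ?_⟩
  rw [← dist_eq_norm]
  exact hθδ _ (hfs (hτ t ht).1) _ (hfs ht) (by rw [dist_eq_norm]; exact hτf t ht)

lemma comp_continuous [ProperSpace E] (hT : IsClosed T) {f : ℝ → E} {θ : E → F}
    (hθ : Continuous θ) (hf : APfun T f) : APfun T (θ ∘ f) := by
  obtain ⟨C, hC⟩ := hf.exists_bound hT
  exact hf.comp_uniformContinuousOn
    ((isCompact_closedBall 0 C).uniformContinuousOn_of_continuous hθ.continuousOn)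
    fun t ht => mem_closedBall_zero_iff.2 (hC t ht)

lemma add (hT : IsClosed T) (hPi : ∃ τ ∈ tsPi T, τ ≠ 0) {f g : ℝ → E}
    (hf : APfun T f) (hg : APfun T g) : APfun T (f + g) :=
  (hf.prodMk hT hPi hg).comp_uniformContinuousOn (θ := fun p : E × E => p.1 + p.2)
    uniformContinuous_add.uniformContinuousOn (mapsTo_univ _ _)

lemma sub (hT : IsClosed T) (hPi : ∃ τ ∈ tsPi T, τ ≠ 0) {f g : ℝ → E}
    (hf : APfun T f) (hg : APfun T g) : APfun T (f - g) :=
  (hf.prodMk hT hPi hg).comp_uniformContinuousOn (θ := fun p : E × E => p.1 - p.2)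
    uniformContinuous_sub.uniformContinuousOn (mapsTo_univ _ _)

lemma sum (hT : IsClosed T) (hPi : ∃ τ ∈ tsPi T, τ ≠ 0) {ι : Type*} {s : Finset ι}
    {f : ι → ℝ → E} (hf : ∀ i ∈ s, APfun T (f i)) : APfun T (∑ i ∈ s, f i) := by
  classical
  induction s using Finset.induction_on with
  | empty => exact const hPi 0
  | insert i s hi ih =>
    rw [Finset.sum_insert hi]
    exact (hf i (Finset.mem_insert_self i s)).add hT hPi
      (ih fun j hj => hf j (Finset.mem_insert_of_mem hj))

lemma of_tendstoUniformlyOn {ι : Type*} {l : Filter ι} [l.NeBot] {f : ι → ℝ → E} {p : ℝ → E}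
    (hf : ∀ i, APfun T (f i)) (hlim : TendstoUniformlyOn f p l T) : APfun T p := by
  refine ⟨hlim.continuousOn (Frequently.of_forall fun i => (hf i).1), fun ε hε => ?_⟩
  obtain ⟨i, hi⟩ := (Metric.tendstoUniformlyOn_iff.1 hlim (ε / 3) (by positivity)).exists
  obtain ⟨l, hl, H⟩ := (hf i).2 (ε / 3) (by positivity)
  refine ⟨l, hl, fun x => ?_⟩
  obtain ⟨τ, hτ, hτI, hτf⟩ := H x
  refine ⟨τ, hτ, hτI, fun t ht => ?_⟩
  have h₁ := hi _ (hτ t ht).1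
  have h₂ := hi t ht
  rw [dist_eq_norm] at h₁ h₂
  calc ‖p (t + τ) - p t‖
      = ‖(p (t + τ) - f i (t + τ)) + (f i (t + τ) - f i t) - (p t - f i t)‖ := by abel_nf
    _ ≤ ‖p (t + τ) - f i (t + τ)‖ + ‖f i (t + τ) - f i t‖ + ‖p t - f i t‖ :=
        norm_sub_le_of_le (norm_add_le _ _) le_rfl
    _ < ε := by linarith [hτf t ht]

end APfun

section BoundedContinuous

variable {T : Set ℝ} {E : Type*} [NormedAddCommGroup E]

lemma APfun.bcfun (hT : IsClosed T) {f : ℝ → E} (hf : APfun T f) : BCfun T f :=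
  ⟨hf.1, hf.exists_bound hT⟩

lemma BCfun.add {f g : ℝ → E} (hf : BCfun T f) (hg : BCfun T g) : BCfun T (f + g) := by
  obtain ⟨C₁, hC₁⟩ := hf.2
  obtain ⟨C₂, hC₂⟩ := hg.2
  exact ⟨hf.1.add hg.1, C₁ + C₂, fun t ht =>
    (norm_add_le _ _).trans (add_le_add (hC₁ t ht) (hC₂ t ht))⟩

lemma BCfun.of_tendstoUniformlyOn {ι : Type*} {l : Filter ι} [l.NeBot] {f : ι → ℝ → E}
    {q : ℝ → E} (hf : ∀ i, BCfun T (f i)) (hlim : TendstoUniformlyOn f q l T) : BCfun T q := by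
  obtain ⟨i, hi⟩ := (Metric.tendstoUniformlyOn_iff.1 hlim 1 one_pos).exists
  obtain ⟨C, hC⟩ := (hf i).2
  refine ⟨hlim.continuousOn (Frequently.of_forall fun i => (hf i).1), C + 1, fun t ht => ?_⟩
  have := hi t ht
  rw [dist_eq_norm] at this
  linarith [norm_le_norm_add_norm_sub' (q t) (f i t), hC t ht]

end BoundedContinuous

noncomputable def ergodicMean {E : Type*} [NormedAddCommGroup E] (T : Set ℝ) (u : ℝ → ℝ) (q : ℝ → E)
    (r : ℝ) : ℝ :=
  (uQ T u r)⁻¹ * ∫ t in Qr T r, ‖q t‖ * u t ∂(deltaMeasure T)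

structure IsAveragingWeight (T : Set ℝ) (u : ℝ → ℝ) : Prop where
  nonneg : ∀ t ∈ T, 0 ≤ u t
  integrableOn_Qr : ∀ r, IntegrableOn u (Qr T r) (deltaMeasure T)
  eventually_uQ_pos : ∀ᶠ r in alongPi T, 0 < uQ T u r

lemma UInfty.isAveragingWeight {T : Set ℝ} {u : ℝ → ℝ} (hu : UInfty T u) :
    IsAveragingWeight T u where
  nonneg t ht := (hu.2.1 t ht).le
  integrableOn_Qr _ := hu.2.2.1 _ (Metric.isBounded_Icc _ _)
  eventually_uQ_pos := hu.2.2.2.2.eventually_gt_atTop 0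

section ErgodicMean

variable {T : Set ℝ} {u : ℝ → ℝ} {E : Type*} [NormedAddCommGroup E]

lemma measurableSet_Qr (hT : IsClosed T) (r : ℝ) : MeasurableSet (Qr T r) :=
  measurableSet_Icc.inter hT.measurableSet

lemma BCfun.integrableOn_norm_mul (hT : IsClosed T) (hu : IsAveragingWeight T u) {q : ℝ → E}
    (hq : BCfun T q) (r : ℝ) :
    IntegrableOn (fun t => ‖q t‖ * u t) (Qr T r) (deltaMeasure T) := by
  obtain ⟨C, hC⟩ := hq.2
  have hQ := measurableSet_Qr hT r
  refine (hu.integrableOn_Qr r).bdd_mul (c := C)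
    ((hq.1.mono inter_subset_right).norm.aestronglyMeasurable hQ) ?_
  filter_upwards [ae_restrict_mem hQ] with t ht
  simpa using hC t ht.2

@[simp]
lemma ergodicMean_zero (r : ℝ) : ergodicMean T u (0 : ℝ → E) r = 0 := by
  simp [ergodicMean]

lemma ergodicMean_nonneg (hT : IsClosed T) (hu : IsAveragingWeight T u) (q : ℝ → E) (r : ℝ) :
    0 ≤ ergodicMean T u q r := by
  have hQ := measurableSet_Qr hT r
  exact mul_nonneg (inv_nonneg.2 (setIntegral_nonneg hQ fun t ht => hu.nonneg t ht.2))
    (setIntegral_nonneg hQ fun t ht => mul_nonneg (norm_nonneg _) (hu.nonneg t ht.2))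

lemma ergodicMean_le (hT : IsClosed T) (hu : IsAveragingWeight T u) {q h₁ h₂ : ℝ → E}
    (hq : BCfun T q) (hh₁ : BCfun T h₁) (hh₂ : BCfun T h₂) {a r : ℝ}
    (hle : ∀ t ∈ T, ‖q t‖ ≤ a + ‖h₁ t‖ + ‖h₂ t‖) (hr : 0 < uQ T u r) :
    ergodicMean T u q r ≤ a + ergodicMean T u h₁ r + ergodicMean T u h₂ r := by
  have Ia := (hu.integrableOn_Qr r).const_mul a
  have I₁ := hh₁.integrableOn_norm_mul hT hu r
  have I₂ := hh₂.integrableOn_norm_mul hT hu r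
  have key : ∫ t in Qr T r, ‖q t‖ * u t ∂(deltaMeasure T) ≤
      a * uQ T u r + ∫ t in Qr T r, ‖h₁ t‖ * u t ∂(deltaMeasure T) +
        ∫ t in Qr T r, ‖h₂ t‖ * u t ∂(deltaMeasure T) := calc
    _ ≤ ∫ t in Qr T r, (a * u t + ‖h₁ t‖ * u t + ‖h₂ t‖ * u t) ∂(deltaMeasure T) := by
        refine setIntegral_mono_on (hq.integrableOn_norm_mul hT hu r) ((Ia.fun_add I₁).fun_add I₂)
          (measurableSet_Qr hT r) fun t ht => ?_
        calc ‖q t‖ * u t ≤ (a + ‖h₁ t‖ + ‖h₂ t‖) * u t :=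
              mul_le_mul_of_nonneg_right (hle t ht.2) (hu.nonneg t ht.2)
          _ = _ := by ring
    _ = _ := by rw [integral_add (Ia.fun_add I₁) I₂, integral_add Ia I₁, integral_const_mul]; rfl
  calc ergodicMean T u q r
      ≤ (uQ T u r)⁻¹ * (a * uQ T u r + ∫ t in Qr T r, ‖h₁ t‖ * u t ∂(deltaMeasure T) +
        ∫ t in Qr T r, ‖h₂ t‖ * u t ∂(deltaMeasure T)) :=
        mul_le_mul_of_nonneg_left key (inv_nonneg.2 hr.le)
    _ = _ := by
        simp only [ergodicMean]
        field_simp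

end ErgodicMean

namespace PAP0fun

variable {T : Set ℝ} {u : ℝ → ℝ} {E : Type*} [NormedAddCommGroup E]

lemma zero : PAP0fun T u (0 : ℝ → E) :=
  ⟨⟨continuousOn_const, 0, by simp⟩, by simpa using tendsto_const_nhds⟩

lemma of_norm_le_add (hT : IsClosed T) (hu : IsAveragingWeight T u) {q h₁ h₂ : ℝ → E}
    (hq : BCfun T q) (hh₁ : PAP0fun T u h₁) (hh₂ : PAP0fun T u h₂)
    (hle : ∀ t ∈ T, ‖q t‖ ≤ ‖h₁ t‖ + ‖h₂ t‖) : PAP0fun T u q := by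
  refine ⟨hq, tendsto_of_tendsto_of_tendsto_of_le_of_le' tendsto_const_nhds
    (by simpa using hh₁.2.add hh₂.2) (Eventually.of_forall (ergodicMean_nonneg hT hu q)) ?_⟩
  filter_upwards [hu.eventually_uQ_pos] with r hr
  have := ergodicMean_le hT hu hq hh₁.1 hh₂.1 (a := 0) (by simpa using hle) hr
  rw [zero_add] at this
  exact this

lemma add (hT : IsClosed T) (hu : IsAveragingWeight T u) {f g : ℝ → E}
    (hf : PAP0fun T u f) (hg : PAP0fun T u g) : PAP0fun T u (f + g) :=
  of_norm_le_add hT hu (hf.1.add hg.1) hf hg fun _ _ => norm_add_le _ _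

lemma sum (hT : IsClosed T) (hu : IsAveragingWeight T u) {ι : Type*} {s : Finset ι}
    {f : ι → ℝ → E} (hf : ∀ i ∈ s, PAP0fun T u (f i)) : PAP0fun T u (∑ i ∈ s, f i) := by
  classical
  induction s using Finset.induction_on with
  | empty => exact zero
  | insert i s hi ih =>
    rw [Finset.sum_insert hi]
    exact (hf i (Finset.mem_insert_self i s)).add hT hu
      (ih fun j hj => hf j (Finset.mem_insert_of_mem hj))

lemma of_tendstoUniformlyOn (hT : IsClosed T) (hu : IsAveragingWeight T u) {ι : Type*}
    {l : Filter ι} [l.NeBot] {f : ι → ℝ → E} {q : ℝ → E} (hf : ∀ i, PAP0fun T u (f i))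
    (hlim : TendstoUniformlyOn f q l T) : PAP0fun T u q := by
  have hq := BCfun.of_tendstoUniformlyOn (fun i => (hf i).1) hlim
  refine ⟨hq, tendsto_order.2 ⟨fun a ha => Eventually.of_forall fun r =>
    ha.trans_le (ergodicMean_nonneg hT hu q r), fun ε hε => ?_⟩⟩
  obtain ⟨i, hi⟩ := (Metric.tendstoUniformlyOn_iff.1 hlim (ε / 2) (by positivity)).exists
  filter_upwards [hu.eventually_uQ_pos, (hf i).2.eventually (gt_mem_nhds (half_pos hε))]
    with r hr hir
  have hle : ∀ t ∈ T, ‖q t‖ ≤ ε / 2 + ‖f i t‖ + ‖(0 : ℝ → E) t‖ := fun t ht => by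
    have := hi t ht
    rw [dist_eq_norm] at this
    linarith [norm_le_norm_add_norm_sub' (q t) (f i t), norm_nonneg ((0 : ℝ → E) t)]
  have := ergodicMean_le hT hu hq (hf i).1 (zero (u := u)).1 hle hr
  rw [ergodicMean_zero] at this
  change ergodicMean T u (f i) r < ε / 2 at hir
  change ergodicMean T u q r < ε
  linarith

end PAP0fun

section SoftThreshold

variable {E : Type*} [NormedAddCommGroup E] [NormedSpace ℝ E] {c : ℝ}

noncomputable def softThreshold (c : ℝ) (v : E) : E := (1 - c / max c ‖v‖) • v

lemma continuous_softThreshold (hc : 0 < c) : Continuous (softThreshold (E := E) c) :=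
  (continuous_const.sub (continuous_const.div (continuous_const.max continuous_norm)
    fun _ => (hc.trans_le (le_max_left _ _)).ne')).smul continuous_id

lemma norm_sub_softThreshold_le (hc : 0 < c) (v : E) : ‖v - softThreshold c v‖ ≤ c := by
  have hmax : 0 < max c ‖v‖ := hc.trans_le (le_max_left _ _)
  rw [softThreshold, sub_smul, one_smul, sub_sub_cancel, norm_smul, Real.norm_eq_abs,
    abs_of_nonneg (by positivity), div_mul_eq_mul_div, div_le_iff₀ hmax]
  exact mul_le_mul_of_nonneg_left (le_max_right _ _) hc.le

lemma norm_softThreshold (hc : 0 < c) (v : E) : ‖softThreshold c v‖ = max (‖v‖ - c) 0 := by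
  rcases le_total ‖v‖ c with h | h
  · rw [softThreshold, max_eq_left h, div_self hc.ne', sub_self, zero_smul, norm_zero,
      max_eq_right (by linarith)]
  · rw [softThreshold, max_eq_right h, norm_smul, Real.norm_eq_abs,
      abs_of_nonneg (sub_nonneg.2 (div_le_one_of_le₀ h (norm_nonneg _))), max_eq_left (by linarith),
      sub_mul, div_mul_cancel₀ _ (hc.trans_le h).ne', one_mul]

lemma norm_softThreshold_le (hc : 0 < c) {v w : E} (h : ‖v - w‖ ≤ c) :
    ‖softThreshold c v‖ ≤ ‖w‖ := by
  rw [norm_softThreshold hc]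
  exact max_le (by linarith [norm_sub_norm_le v w]) (norm_nonneg w)

end SoftThreshold

lemma tendstoUniformlyOn_of_norm_sub_le {E : Type*} [NormedAddCommGroup E] {F : ℕ → ℝ → E}
    {g : ℝ → E} {s : Set ℝ} {δ : ℕ → ℝ} (hδ : Tendsto δ atTop (𝓝 0))
    (h : ∀ j, ∀ t ∈ s, ‖F j t - g t‖ ≤ δ j) : TendstoUniformlyOn F g atTop s :=
  Metric.tendstoUniformlyOn_iff.2 fun ε hε => by
    filter_upwards [hδ.eventually (gt_mem_nhds hε)] with j hj t ht
    rw [dist_comm, dist_eq_norm]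
    exact (h j t ht).trans_lt hj

theorem PAPfun.of_summable_approx {T : Set ℝ} {u : ℝ → ℝ} {E : Type*} [NormedAddCommGroup E]
    [NormedSpace ℝ E] [ProperSpace E] (hT : IsClosed T) (hPi : ∃ τ ∈ tsPi T, τ ≠ 0)
    (hu : IsAveragingWeight T u) {P Q : ℕ → ℝ → E} {g : ℝ → E} {δ : ℕ → ℝ}
    (hδpos : ∀ j, 0 < δ j) (hδ : Summable δ) (hP : ∀ j, APfun T (P j))
    (hQ : ∀ j, PAP0fun T u (Q j)) (hPQ : ∀ j, ∀ t ∈ T, ‖P j t + Q j t - g t‖ ≤ δ j) :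
    PAPfun T u g := by
  set c : ℕ → ℝ := fun j => δ j + δ (j + 1)
  have hc : ∀ j, 0 < c j := fun j => add_pos (hδpos j) (hδpos (j + 1))
  set y : ℕ → ℝ → E := fun j => softThreshold (c j) ∘ (P (j + 1) - P j)
  set d : ℕ → ℝ → E := fun j => P (j + 1) - P j - y j
  set S : ℕ → ℝ → E := fun J => P 0 + ∑ j ∈ Finset.range J, d j
  set p : ℝ → E := fun t => P 0 t + ∑' j, d j t
  have hy : ∀ j, APfun T (y j) := fun j =>
    ((hP (j + 1)).sub hT hPi (hP j)).comp_continuous hT (continuous_softThreshold (hc j))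
  have hyQ : ∀ j, PAP0fun T u (y j) := fun j => by
    refine PAP0fun.of_norm_le_add hT hu ((hy j).bcfun hT) (hQ j) (hQ (j + 1)) fun t ht => ?_
    refine (norm_softThreshold_le (hc j) (w := Q j t - Q (j + 1) t) ?_).trans (norm_sub_le _ _)
    have := norm_sub_le_of_le (hPQ (j + 1) t ht) (hPQ j t ht)
    rw [show P (j + 1) t + Q (j + 1) t - g t - (P j t + Q j t - g t)
      = (P (j + 1) - P j) t - (Q j t - Q (j + 1) t) by simp only [Pi.sub_apply]; abel] at this
    exact this.trans_eq (add_comm _ _)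
  have hS : ∀ J, APfun T (S J) := fun J => (hP 0).add hT hPi (APfun.sum hT hPi fun j _ =>
    ((hP (j + 1)).sub hT hPi (hP j)).sub hT hPi (hy j))
  have hSp : TendstoUniformlyOn S p atTop T := by
    have hd : ∀ j, ∀ t ∈ T, ‖d j t‖ ≤ c j := fun j t _ => norm_sub_softThreshold_le (hc j) _
    have := Metric.tendstoUniformlyOn_iff.1
      (tendstoUniformlyOn_tsum_nat (hδ.add ((summable_nat_add_iff 1).2 hδ)) hd)
    refine Metric.tendstoUniformlyOn_iff.2 fun ε hε => (this ε hε).mono fun J hJ t ht => ?_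
    simpa only [S, p, Pi.add_apply, Finset.sum_apply, dist_add_left] using hJ t ht
  have hgp : PAP0fun T u (g - p) := by
    refine PAP0fun.of_tendstoUniformlyOn hT hu (f := fun J => P J + Q J - S J) (fun J => ?_)
      ((tendstoUniformlyOn_of_norm_sub_le hδ.tendsto_atTop_zero hPQ).sub hSp)
    rw [show P J + Q J - S J = Q J + ∑ j ∈ Finset.range J, y j by
      simp only [S, d]
      rw [Finset.sum_sub_distrib, Finset.sum_range_sub]
      abel]
    exact (hQ J).add hT hu (PAP0fun.sum hT hu fun j _ => hyQ j)
  exact ⟨p, g - p, APfun.of_tendstoUniformlyOn hS hSp, hgp, fun t _ => (add_sub_cancel _ _).symm⟩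

/-- If a sequence `(f_m) ⊆ PAP(T,ℝⁿ,u)` (with `u ∈ U_∞^Inv`) converges uniformly on `T` to `f`,
i.e. `‖f_m − f‖_∞ → 0`, then `f ∈ PAP(T,ℝⁿ,u)`. -/
theorem pap_closed_under_uniform_limits {n : ℕ} (T : Set ℝ) (hT : APTimeScale T)
    (u : ℝ → ℝ) (hu : UInftyInv T u)
    (f : ℕ → ℝ → Fin n → ℝ) (g : ℝ → Fin n → ℝ)
    (hfm : ∀ m, PAPfun T u (f m))
    (hconv : ∀ ε > 0, ∃ N : ℕ, ∀ m ≥ N, ∀ t ∈ T, ‖f m t - g t‖ ≤ ε) :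
    PAPfun T u g := by
  obtain ⟨-, hTc, hPi⟩ := hT
  choose P Q hP hQ hPQ using hfm
  choose N hN using fun j : ℕ => hconv ((1 / 2 : ℝ) ^ j) (by positivity)
  refine PAPfun.of_summable_approx hTc hPi hu.1.isAveragingWeight (fun j => by positivity)
    summable_geometric_two (P := fun j => P (N j)) (Q := fun j => Q (N j)) (fun _ => hP _)
    (fun _ => hQ _) fun j t ht => ?_
  rw [← hPQ (N j) t ht]
  exact hN j (N j) le_rfl t ht
end
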